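/- arXiv:2501.05429 — 8 statements merged into one kernel-verified Lean document; each statement's English description precedes it below -/
import Mathlib

section
/- Fix integers l ≥ 2 and n ≥ 1, and nonzero vectors x₁,…,xₙ, y₁,…,yₙ ∈ ℝ^{l+1}. The following are equivalent: (i) there exist real l×(l+1) matrices A and B, each of rank l, such that for every i one has A·xᵢ ≠ 0 and A·xᵢ ∼ B·yᵢ; (ii) there exist real (l+1)×(l+2) matrices A′ and B′, each of rank l+1, nonzero vectors a′, b′ ∈ ℝ^{l+2} with A′·a′ = 0 and B′·b′ = 0, and nonzero vectors z₁,…,zₙ ∈ ℝ^{l+2} with zᵢ ∉ span{a′, b′} for every i, such that for every i one has A′·zᵢ ∼ xᵢ and B′·zᵢ ∼ yᵢ. -/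
/-!
Both directions are pure linear algebra on cameras viewed as surjections with one-dimensional
kernel.

(i) ⇒ (ii): the fibre product `{(v, v') | A v = B v'}` of the two cameras `A B : ℝ^{l+1} → ℝ^l`
has dimension `l + 2`, and its two projections `p q` to `ℝ^{l+1}` are cameras with
`A ∘ p = B ∘ q`. The points `zᵢ = (xᵢ, cᵢ yᵢ)` lie in it, and they avoid the span of the two
centers because `A ∘ p` kills both centers but not `zᵢ`.

(ii) ⇒ (i): enlarge `span {a', b'}` to a plane `T ⊆ ℝ^{l+2}` still avoiding every `zᵢ` (a real
vector space is never a finite union of proper subspaces), and let `C : ℝ^{l+2} → ℝ^l` have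
kernel `T`. Since `T` contains the kernels of `A'` and `B'`, `C` factors as `A ∘ A' = B ∘ B'`,
and then `A xᵢ` and `B yᵢ` are both proportional to `C zᵢ ≠ 0`.
-/

open Matrix

/-- `u ∼ v`: the vectors are equal up to a nonzero real scalar. -/
def Sim {k : ℕ} (u v : Fin k → ℝ) : Prop := ∃ c : ℝ, c ≠ 0 ∧ u = c • v

open Module Submodule Function

namespace Sim

variable {k : ℕ} {u v w : Fin k → ℝ}

theorem refl (u : Fin k → ℝ) : Sim u u := ⟨1, one_ne_zero, (one_smul ℝ u).symm⟩

theorem symm : Sim u v → Sim v u := by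
  rintro ⟨c, hc, rfl⟩
  exact ⟨c⁻¹, inv_ne_zero hc, (inv_smul_smul₀ hc v).symm⟩

theorem trans : Sim u v → Sim v w → Sim u w := by
  rintro ⟨c, hc, rfl⟩ ⟨d, hd, rfl⟩
  exact ⟨c * d, mul_ne_zero hc hd, smul_smul c d w⟩

theorem map {m : ℕ} (f : (Fin k → ℝ) →ₗ[ℝ] Fin m → ℝ) : Sim u v → Sim (f u) (f v) := by
  rintro ⟨c, hc, rfl⟩
  exact ⟨c, hc, map_smul f c v⟩

theorem ne_zero (h : Sim u v) (hv : v ≠ 0) : u ≠ 0 := by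
  obtain ⟨c, hc, rfl⟩ := h
  exact smul_ne_zero hc hv

end Sim

section Matrix

variable {K : Type*} [Field K] {m k : ℕ}

theorem Matrix.rank_eq_iff_surjective (M : Matrix (Fin m) (Fin k) K) :
    M.rank = m ↔ Surjective M.mulVecLin := by
  rw [← LinearMap.range_eq_top, Matrix.rank]
  exact ⟨fun h => eq_top_of_finrank_eq (h.trans (finrank_fin_fun K).symm),
    fun h => by rw [h, finrank_top, finrank_fin_fun]⟩

theorem LinearMap.rank_toMatrix'_eq_iff_surjective (f : (Fin k → K) →ₗ[K] Fin m → K) :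
    (LinearMap.toMatrix' f).rank = m ↔ Surjective f := by
  rw [Matrix.rank_eq_iff_surjective, ← Matrix.toLin'_apply', Matrix.toLin'_toMatrix']

end Matrix

theorem LinearMap.exists_comp_eq_of_ker_le {R V W X : Type*} [Ring R] [AddCommGroup V]
    [Module R V] [AddCommGroup W] [Module R W] [AddCommGroup X] [Module R X] {f : V →ₗ[R] W}
    (hf : Surjective f) {g : V →ₗ[R] X} (hfg : LinearMap.ker f ≤ LinearMap.ker g) :
    ∃ h : W →ₗ[R] X, h ∘ₗ f = g :=
  ⟨(LinearMap.ker f).liftQ g hfg ∘ₗ (f.quotKerEquivOfSurjective hf).symm.toLinearMap,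
    LinearMap.ext fun v => by simp⟩

section Field

variable {K V W : Type*} [Field K] [AddCommGroup V] [Module K V] [AddCommGroup W] [Module K W]

theorem LinearMap.ker_eq_span_singleton_of_finrank_eq_add_one [FiniteDimensional K V]
    {f : V →ₗ[K] W} (hf : Surjective f) (hVW : finrank K V = finrank K W + 1) {a : V}
    (ha : a ≠ 0) (hfa : f a = 0) : ker f = span K {a} := by
  have hker := f.finrank_range_add_finrank_ker
  rw [LinearMap.range_eq_top.2 hf, finrank_top] at hker
  refine (eq_of_le_of_finrank_le ((span_singleton_le_iff_mem a _).2 hfa) ?_).symm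
  rw [finrank_span_singleton ha]
  omega

theorem Submodule.exists_surjective_ker_eq [FiniteDimensional K V] (S : Submodule K V) {m : ℕ}
    (h : finrank K S + m = finrank K V) :
    ∃ C : V →ₗ[K] Fin m → K, Surjective C ∧ LinearMap.ker C = S := by
  have hq : finrank K (V ⧸ S) = finrank K (Fin m → K) := by
    have := S.finrank_quotient_add_finrank
    rw [finrank_fin_fun]
    omega
  let e := LinearEquiv.ofFinrankEq _ _ hq
  exact ⟨e ∘ₗ S.mkQ, e.surjective.comp S.mkQ_surjective, by rw [LinearEquiv.ker_comp, ker_mkQ]⟩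

theorem LinearMap.exists_fin_pullback [FiniteDimensional K V]
    {V' : Type*} [AddCommGroup V'] [Module K V'] [FiniteDimensional K V']
    {f : V →ₗ[K] W} {g : V' →ₗ[K] W} (hf : Surjective f) (hg : Surjective g) {m : ℕ}
    (hm : finrank K V + finrank K V' = m + finrank K W) :
    ∃ (p : (Fin m → K) →ₗ[K] V) (q : (Fin m → K) →ₗ[K] V'),
      Surjective p ∧ Surjective q ∧ f ∘ₗ p = g ∘ₗ q ∧
      ∀ v v', f v = g v' → ∃ z, p z = v ∧ q z = v' := by
  let φ := f ∘ₗ LinearMap.fst K V V' - g ∘ₗ LinearMap.snd K V V'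
  have hP : finrank K (LinearMap.ker φ) = m := by
    have hφ : LinearMap.range φ = ⊤ := LinearMap.range_eq_top.2 fun w => by
      obtain ⟨v, rfl⟩ := hf w
      exact ⟨(v, 0), by simp [φ]⟩
    have := φ.finrank_range_add_finrank_ker
    rw [hφ, finrank_top, finrank_prod] at this
    omega
  let e := LinearEquiv.ofFinrankEq (Fin m → K) (LinearMap.ker φ) (by rw [finrank_fin_fun, hP])
  have hlift : ∀ v v', f v = g v' → ∃ z, (e z : V × V') = (v, v') := fun v v' h =>
    ⟨e.symm ⟨(v, v'), by simp [φ, h]⟩, by simp⟩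
  refine ⟨LinearMap.fst K V V' ∘ₗ (LinearMap.ker φ).subtype ∘ₗ e.toLinearMap,
    LinearMap.snd K V V' ∘ₗ (LinearMap.ker φ).subtype ∘ₗ e.toLinearMap,
    fun v => ?_, fun v' => ?_, ?_, fun v v' h => ?_⟩
  · obtain ⟨v', hv'⟩ := hg (f v)
    obtain ⟨z, hz⟩ := hlift v v' hv'.symm
    exact ⟨z, by simp [hz]⟩
  · obtain ⟨v, hv⟩ := hf (g v')
    obtain ⟨z, hz⟩ := hlift v v' hv
    exact ⟨z, by simp [hz]⟩
  · refine LinearMap.ext fun z => ?_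
    have hz := LinearMap.mem_ker.1 (e z).2
    simp only [φ, LinearMap.sub_apply, LinearMap.comp_apply, sub_eq_zero] at hz
    simpa using hz
  · obtain ⟨z, hz⟩ := hlift v v' h
    exact ⟨z, by simp [hz]⟩

variable [Infinite K] [FiniteDimensional K V] {ι : Type*} [Finite ι]

theorem Submodule.exists_notMem_sup_span_singleton (S : Submodule K V)
    (hS : finrank K S + 2 ≤ finrank K V) {z : ι → V} (hz : ∀ i, z i ∉ S) :
    ∃ w, w ∉ S ∧ ∀ i, z i ∉ S ⊔ span K {w} := by
  -- `T none = S ⊔ span {0} = S`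
  let T (o : Option ι) : Submodule K V := S ⊔ span K {o.elim 0 z}
  have hT (o : Option ι) : T o ≠ ⊤ := by
    intro hTo
    have h : finrank K (T o) ≤ finrank K S + 1 :=
      (finrank_add_le_finrank_add_finrank S _).trans <| by
        gcongr
        simpa using finrank_span_le_card (R := K) ({o.elim 0 z} : Set V)
    rw [hTo, finrank_top] at h
    omega
  obtain ⟨w, hw⟩ : ∃ w, ∀ o, w ∉ T o := by
    by_contra! h
    obtain ⟨o, ho⟩ := Subspace.exists_eq_top_of_iUnion_eq_univ (p := T)
      (Set.eq_univ_of_forall fun w => Set.mem_iUnion.2 (h w))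
    exact hT o ho
  refine ⟨w, fun hwS => hw none (mem_sup_left hwS), fun i hzi => hw (some i) ?_⟩
  have := mem_span_insert_exchange (K := K) (s := (S : Set V)) (x := z i) (y := w)
  rw [span_insert, span_insert, span_eq, sup_comm, sup_comm (span K {z i})] at this
  exact this hzi (hz i)

theorem Submodule.exists_le_finrank_eq_forall_notMem (S : Submodule K V) {k : ℕ}
    (hSk : finrank K S ≤ k) (hk : k < finrank K V) {z : ι → V} (hz : ∀ i, z i ∉ S) :
    ∃ T, S ≤ T ∧ finrank K T = k ∧ ∀ i, z i ∉ T := by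
  induction k, hSk using Nat.le_induction with
  | base => exact ⟨S, le_rfl, rfl, hz⟩
  | succ k hSk ih =>
    obtain ⟨T, hST, hT, hzT⟩ := ih (by omega)
    obtain ⟨w, hw, hzw⟩ := T.exists_notMem_sup_span_singleton (by omega) hzT
    exact ⟨T ⊔ span K {w}, hST.trans le_sup_left,
      by rw [finrank_sup_span_singleton hw, hT], hzw⟩

end Field

section Cameras

variable {l n : ℕ}

theorem exists_common_reconstruction_of_common_image {x y : Fin n → Fin (l + 1) → ℝ}
    {A B : Matrix (Fin l) (Fin (l + 1)) ℝ} (hA : A.rank = l) (hB : B.rank = l)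
    (hxy : ∀ i, A.mulVec (x i) ≠ 0 ∧ Sim (A.mulVec (x i)) (B.mulVec (y i))) :
    ∃ (A' B' : Matrix (Fin (l + 1)) (Fin (l + 2)) ℝ)
        (a' b' : Fin (l + 2) → ℝ) (z : Fin n → Fin (l + 2) → ℝ),
        A'.rank = l + 1 ∧ B'.rank = l + 1 ∧
        a' ≠ 0 ∧ b' ≠ 0 ∧
        A'.mulVec a' = 0 ∧ B'.mulVec b' = 0 ∧
        ∀ i, z i ≠ 0 ∧ z i ∉ Submodule.span ℝ {a', b'} ∧
          Sim (A'.mulVec (z i)) (x i) ∧ Sim (B'.mulVec (z i)) (y i) := by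
  obtain ⟨p, q, hp, hq, hpq, hlift⟩ := LinearMap.exists_fin_pullback
    (A.rank_eq_iff_surjective.1 hA) (B.rank_eq_iff_surjective.1 hB) (m := l + 2)
    (by simp only [finrank_fin_fun]; ring)
  obtain ⟨a', ha'p, ha'⟩ := (LinearMap.ker p).exists_mem_ne_zero_of_ne_bot
    (LinearMap.ker_ne_bot_of_finrank_lt (by simp))
  obtain ⟨b', hb'q, hb'⟩ := (LinearMap.ker q).exists_mem_ne_zero_of_ne_bot
    (LinearMap.ker_ne_bot_of_finrank_lt (by simp))
  have hspan : span ℝ {a', b'} ≤ LinearMap.ker (A.mulVecLin ∘ₗ p) := by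
    rw [span_le, Set.insert_subset_iff, Set.singleton_subset_iff]
    refine ⟨by simp [LinearMap.mem_ker.1 ha'p], ?_⟩
    rw [SetLike.mem_coe, hpq]
    simp [LinearMap.mem_ker.1 hb'q]
  have hz : ∀ i, ∃ z, p z = x i ∧ Sim (q z) (y i) := fun i => by
    obtain ⟨c, hc, hc'⟩ := (hxy i).2
    obtain ⟨z, hpz, hqz⟩ := hlift (x i) (c • y i) (by simp [hc'])
    exact ⟨z, hpz, c, hc, hqz⟩
  choose z hpz hqz using hz
  have hzspan : ∀ i, z i ∉ span ℝ {a', b'} := fun i hi =>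
    (hxy i).1 (by simpa [hpz] using LinearMap.mem_ker.1 (hspan hi))
  refine ⟨LinearMap.toMatrix' p, LinearMap.toMatrix' q, a', b', z,
    (LinearMap.rank_toMatrix'_eq_iff_surjective p).2 hp,
    (LinearMap.rank_toMatrix'_eq_iff_surjective q).2 hq, ha', hb',
    by simpa using ha'p, by simpa using hb'q, fun i => ⟨?_, hzspan i, ?_, ?_⟩⟩
  · rintro hzi
    exact hzspan i (hzi ▸ zero_mem _)
  · simpa [hpz] using Sim.refl (x i)
  · simpa using hqz i

theorem exists_common_image_of_common_reconstruction (hl : 1 ≤ l)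
    {x y : Fin n → Fin (l + 1) → ℝ} {A' B' : Matrix (Fin (l + 1)) (Fin (l + 2)) ℝ}
    {a' b' : Fin (l + 2) → ℝ} {z : Fin n → Fin (l + 2) → ℝ}
    (hA' : A'.rank = l + 1) (hB' : B'.rank = l + 1) (ha' : a' ≠ 0) (hb' : b' ≠ 0)
    (hAa : A'.mulVec a' = 0) (hBb : B'.mulVec b' = 0)
    (hz : ∀ i, z i ∉ span ℝ {a', b'} ∧
      Sim (A'.mulVec (z i)) (x i) ∧ Sim (B'.mulVec (z i)) (y i)) :
    ∃ A B : Matrix (Fin l) (Fin (l + 1)) ℝ,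
      A.rank = l ∧ B.rank = l ∧
        ∀ i, A.mulVec (x i) ≠ 0 ∧ Sim (A.mulVec (x i)) (B.mulVec (y i)) := by
  classical
  obtain ⟨T, hT, hTrank, hzT⟩ := (span ℝ {a', b'}).exists_le_finrank_eq_forall_notMem (k := 2)
    ((finrank_span_le_card _).trans (by simpa using Finset.card_le_two)) (by simp; omega)
    fun i => (hz i).1
  obtain ⟨C, hC, hCker⟩ := T.exists_surjective_ker_eq (m := l) (by simp [hTrank]; omega)
  have hA's := A'.rank_eq_iff_surjective.1 hA'
  have hB's := B'.rank_eq_iff_surjective.1 hB'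
  obtain ⟨A, hA⟩ := LinearMap.exists_comp_eq_of_ker_le hA's (g := C) <| by
    rw [LinearMap.ker_eq_span_singleton_of_finrank_eq_add_one hA's (by simp) ha' (by simpa),
      hCker]
    exact (span_mono (by simp)).trans hT
  obtain ⟨B, hB⟩ := LinearMap.exists_comp_eq_of_ker_le hB's (g := C) <| by
    rw [LinearMap.ker_eq_span_singleton_of_finrank_eq_add_one hB's (by simp) hb' (by simpa),
      hCker]
    exact (span_mono (by simp)).trans hT
  refine ⟨LinearMap.toMatrix' A, LinearMap.toMatrix' B,
    (LinearMap.rank_toMatrix'_eq_iff_surjective A).2 (Surjective.of_comp (hA ▸ hC)),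
    (LinearMap.rank_toMatrix'_eq_iff_surjective B).2 (Surjective.of_comp (hB ▸ hC)),
    fun i => ?_⟩
  have hCz : C (z i) ≠ 0 := fun h => hzT i (hCker ▸ LinearMap.mem_ker.2 h)
  have hAx : Sim (A (x i)) (C (z i)) := by
    simpa [← hA] using ((hz i).2.1.symm.map A)
  have hBy : Sim (B (y i)) (C (z i)) := by
    simpa [← hB] using ((hz i).2.2.symm.map B)
  simp only [LinearMap.toMatrix'_mulVec]
  exact ⟨hAx.ne_zero hCz, hAx.trans hBy.symm⟩

end Cameras

theorem common_image_iff_common_reconstruction_general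
    (l n : ℕ) (hl : 2 ≤ l)
    (x y : Fin n → Fin (l + 1) → ℝ) :
    (∃ A B : Matrix (Fin l) (Fin (l + 1)) ℝ,
        A.rank = l ∧ B.rank = l ∧
        ∀ i, A.mulVec (x i) ≠ 0 ∧ Sim (A.mulVec (x i)) (B.mulVec (y i)))
    ↔
    (∃ (A' B' : Matrix (Fin (l + 1)) (Fin (l + 2)) ℝ)
        (a' b' : Fin (l + 2) → ℝ) (z : Fin n → Fin (l + 2) → ℝ),
        A'.rank = l + 1 ∧ B'.rank = l + 1 ∧
        a' ≠ 0 ∧ b' ≠ 0 ∧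
        A'.mulVec a' = 0 ∧ B'.mulVec b' = 0 ∧
        ∀ i, z i ≠ 0 ∧ z i ∉ Submodule.span ℝ {a', b'} ∧
          Sim (A'.mulVec (z i)) (x i) ∧ Sim (B'.mulVec (z i)) (y i)) := by
  constructor
  · rintro ⟨A, B, hA, hB, hxy⟩
    exact exists_common_reconstruction_of_common_image hA hB hxy
  · rintro ⟨A', B', a', b', z, hA', hB', ha', hb', hAa, hBb, hz⟩
    exact exists_common_image_of_common_reconstruction (by omega) hA' hB' ha' hb' hAa hBb
      fun i => (hz i).2

/-- Theorem 2: two labeled point sets in ℙ^l have a common image in ℙ^{l-1}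
iff they admit a common reconstruction from ℙ^{l+1}. -/
theorem common_image_iff_common_reconstruction
    (l n : ℕ) (hl : 2 ≤ l) (hn : 1 ≤ n)
    (x y : Fin n → Fin (l + 1) → ℝ)
    (hx : ∀ i, x i ≠ 0) (hy : ∀ i, y i ≠ 0) :
    (∃ A B : Matrix (Fin l) (Fin (l + 1)) ℝ,
        A.rank = l ∧ B.rank = l ∧
        ∀ i, A.mulVec (x i) ≠ 0 ∧ Sim (A.mulVec (x i)) (B.mulVec (y i)))
    ↔
    (∃ (A' B' : Matrix (Fin (l + 1)) (Fin (l + 2)) ℝ)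
        (a' b' : Fin (l + 2) → ℝ) (z : Fin n → Fin (l + 2) → ℝ),
        A'.rank = l + 1 ∧ B'.rank = l + 1 ∧
        a' ≠ 0 ∧ b' ≠ 0 ∧
        A'.mulVec a' = 0 ∧ B'.mulVec b' = 0 ∧
        ∀ i, z i ≠ 0 ∧ z i ∉ Submodule.span ℝ {a', b'} ∧
          Sim (A'.mulVec (z i)) (x i) ∧ Sim (B'.mulVec (z i)) (y i)) :=
  common_image_iff_common_reconstruction_general l n hl x y
end

section
/- Fix integers l ≥ 2 and n ≥ 1, and nonzero vectors x₁,…,xₙ, y₁,…,yₙ ∈ ℝ^{l+1}, with coordinates indexed 1,…,l+1. The following are equivalent: (i) for every i, the truncation (xᵢ,₂,…,xᵢ,ₗ₊₁) ∈ ℝ^l obtained by deleting the first coordinate of xᵢ is nonzero and satisfies (xᵢ,₂,…,xᵢ,ₗ₊₁) ∼ (yᵢ,₁,…,yᵢ,ₗ), where the latter is obtained by deleting the last coordinate of yᵢ; (ii) for every i there exists a vector zᵢ ∈ ℝ^{l+2}, not lying in span{e₁, e_{l+2}} (where e₁ and e_{l+2} are the first and last standard basis vectors of ℝ^{l+2}),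 such that (zᵢ,₁,…,zᵢ,ₗ₊₁) ∼ xᵢ and (zᵢ,₂,…,zᵢ,ₗ₊₂) ∼ yᵢ. -/
open Matrix

/-! The middle coordinates `z₂, …, z_{l+1}` of a lift `z` belong to both windows
`(z₁, …, z_{l+1})` and `(z₂, …, z_{l+2})`: they are a multiple of the tail of `x` and of the head
of `y`, and `z ∉ span {e₁, e_{l+2}}` says exactly that they are not all zero. Conversely, `x`
followed by a suitably scaled last coordinate of `y` is a lift. -/

open Fin

theorem mem_span_single_zero_single_last_iff {R : Type*} [Semiring R] {m : ℕ}
    (z : Fin (m + 2) → R) :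
    z ∈ Submodule.span R {Pi.single (0 : Fin (m + 2)) (1 : R), Pi.single (last (m + 1)) 1} ↔
      tail (init z) = 0 := by
  rw [Submodule.mem_span_pair]
  constructor
  · rintro ⟨a, b, rfl⟩
    ext j
    simp [tail, init, Fin.ext_iff, j.isLt.ne]
  · intro hmid
    refine ⟨z 0, z (last (m + 1)), funext fun k => ?_⟩
    induction k using Fin.cases with
    | zero => simp [Fin.ext_iff]
    | succ k =>
      induction k using Fin.lastCases with
      | last => simp [Fin.ext_iff]
      | cast j =>
        have hj : z j.castSucc.succ = 0 := by simpa [tail, init] using congrFun hmid j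
        simp [Fin.ext_iff, j.isLt.ne, hj]

theorem tail_snoc_eq_smul {R : Type*} [Mul R] {m : ℕ} {u v : Fin (m + 1) → R} {c : R}
    (h : tail u = c • init v) : tail (snoc u (c * v (last m)) : Fin (m + 2) → R) = c • v := by
  ext j
  induction j using Fin.lastCases with
  | last => simp [tail]
  | cast j => simpa [tail, init, -castSucc_succ, succ_castSucc] using congrFun h j

theorem sim_tail_init_iff_exists_lift {m : ℕ} (u v : Fin (m + 1) → ℝ) :
    (tail u ≠ 0 ∧ Sim (tail u) (init v)) ↔
      ∃ z : Fin (m + 2) → ℝ,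
        z ∉ Submodule.span ℝ {Pi.single (0 : Fin (m + 2)) (1 : ℝ), Pi.single (last (m + 1)) 1} ∧
        Sim (init z) u ∧ Sim (tail z) v := by
  simp only [mem_span_single_zero_single_last_iff]
  constructor
  · rintro ⟨hu, c, hc, huv⟩
    refine ⟨snoc u (c * v (last m)), ?_, ⟨1, one_ne_zero, by simp⟩, c, hc, tail_snoc_eq_smul huv⟩
    simpa using hu
  · rintro ⟨z, hz, ⟨a, ha, hzu⟩, b, hb, hzv⟩
    have hmid_u : tail (init z) = a • tail u := by rw [hzu]; rfl
    have hmid_v : tail (init z) = b • init v := by rw [tail_init_eq_init_tail, hzv]; rfl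
    refine ⟨fun hu => hz (by simp [hmid_u, hu]), b / a, div_ne_zero hb ha, ?_⟩
    rw [div_eq_inv_mul, mul_smul, ← hmid_v, hmid_u, inv_smul_smul₀ ha]

theorem common_image_iff_reconstruction_special_general
    (l n : ℕ)
    (x y : Fin n → Fin (l + 1) → ℝ) :
    (∀ i, (fun j : Fin l => x i j.succ) ≠ (0 : Fin l → ℝ) ∧
        Sim (fun j : Fin l => x i j.succ) (fun j : Fin l => y i j.castSucc))
    ↔
    (∀ i, ∃ z : Fin (l + 2) → ℝ,
        z ∉ Submodule.span ℝ
          {Pi.single (0 : Fin (l + 2)) (1 : ℝ), Pi.single (Fin.last (l + 1)) (1 : ℝ)} ∧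
        Sim (fun j : Fin (l + 1) => z j.castSucc) (x i) ∧
        Sim (fun j : Fin (l + 1) => z j.succ) (y i)) :=
  forall_congr' fun i => sim_tail_init_iff_exists_lift (x i) (y i)

/-- Lemma 3: the special case of Theorem 2 for the 0-1 projection matrices that
delete the first or last coordinate. -/
theorem common_image_iff_reconstruction_special
    (l n : ℕ) (hl : 2 ≤ l) (hn : 1 ≤ n)
    (x y : Fin n → Fin (l + 1) → ℝ)
    (hx : ∀ i, x i ≠ 0) (hy : ∀ i, y i ≠ 0) :
    (∀ i, (fun j : Fin l => x i j.succ) ≠ (0 : Fin l → ℝ) ∧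
        Sim (fun j : Fin l => x i j.succ) (fun j : Fin l => y i j.castSucc))
    ↔
    (∀ i, ∃ z : Fin (l + 2) → ℝ,
        z ∉ Submodule.span ℝ
          {Pi.single (0 : Fin (l + 2)) (1 : ℝ), Pi.single (Fin.last (l + 1)) (1 : ℝ)} ∧
        Sim (fun j : Fin (l + 1) => z j.castSucc) (x i) ∧
        Sim (fun j : Fin (l + 1) => z j.succ) (y i)) :=
  common_image_iff_reconstruction_special_general l n x y
end

section
/- Let n ≥ 1, let x₁,…,xₙ, y₁,…,yₙ ∈ ℝ³ be nonzero vectors, and let a, b ∈ ℝ³ be nonzero vectors. The following are equivalent: (i) there exist flatland cameras A and B (real 2×3 matrices of rank 2) with A·a = 0 and B·b = 0, such that for every i one has A·xᵢ ≠ 0 and A·xᵢ ∼ B·yᵢ; (ii) there exists a real 3×3 matrix F of rank 2 such that F·a = 0, Fᵀ·b = 0, and for every i: yᵢᵀ·F·xᵢ = 0, F·xᵢ ≠ 0, and Fᵀ·yᵢ ≠ 0. -/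
/-!
Let `J` be the quarter turn of the plane, so that `vᵀ J u` is the determinant of `(v, u)`.
Cameras `A`, `B` give the fundamental matrix `F = Bᵀ J A`, for which `yᵀ F x = (B y)ᵀ J (A x)`
vanishes exactly when the two images are parallel. Since `Bᵀ J` and `Aᵀ Jᵀ` are injective,
`F x` and `Fᵀ y` vanish exactly when `A x` and `B y` do, and `F` has rank `2`. Conversely a rank
factorization `F = U V` with `U` injective yields the cameras `A = V`, `B = J Uᵀ`, and then
`Bᵀ J A = U Jᵀ J V = F`.
-/

open Matrix

section Rank

variable {K : Type*} [Field K] {l m n : Type*}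

theorem Matrix.rank_eq_card_iff_mulVec_injective [Fintype n] {A : Matrix m n K} :
    A.rank = Fintype.card n ↔ Function.Injective A.mulVec := by
  rw [mulVec_injective_iff, linearIndependent_iff_card_eq_finrank_span,
    rank_eq_finrank_span_cols, Set.finrank, eq_comm]

theorem Matrix.rank_mul_of_mulVec_injective [Fintype m] [Fintype n] {P : Matrix l m K}
    (hP : Function.Injective P.mulVec) (M : Matrix m n K) : (P * M).rank = M.rank := by
  rw [rank, rank, mulVecLin_mul, LinearMap.range_comp,
    ← (Submodule.equivMapOfInjective P.mulVecLin hP _).finrank_eq]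

theorem Matrix.exists_mul_eq_of_rank_eq [Fintype n] {F : Matrix m n K} {r : ℕ}
    (hF : F.rank = r) :
    ∃ (U : Matrix m (Fin r) K) (V : Matrix (Fin r) n K),
      Function.Injective U.mulVec ∧ F = U * V := by
  classical
  let b := Module.finBasisOfFinrankEq K (LinearMap.range F.mulVecLin) hF
  refine ⟨LinearMap.toMatrix'
      ((LinearMap.range F.mulVecLin).subtype ∘ₗ b.equivFun.symm.toLinearMap),
    LinearMap.toMatrix' (b.equivFun.toLinearMap ∘ₗ F.mulVecLin.rangeRestrict), ?_, ?_⟩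
  · intro u v huv
    simp only [LinearMap.toMatrix'_mulVec] at huv
    exact b.equivFun.symm.injective (Subtype.val_injective huv)
  · rw [← LinearMap.toMatrix'_comp]
    nth_rw 1 [← LinearMap.toMatrix'_toLin' F, Matrix.toLin'_apply']
    congr 1
    refine LinearMap.ext fun v => ?_
    simp

end Rank

def quarterTurn (R : Type*) [CommRing R] : Matrix (Fin 2) (Fin 2) R := !![0, 1; -1, 0]

section QuarterTurn

variable {R : Type*} [CommRing R]

theorem quarterTurn_transpose : (quarterTurn R)ᵀ = -quarterTurn R := by
  ext i j; fin_cases i <;> fin_cases j <;> simp [quarterTurn]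

theorem quarterTurn_transpose_mul_self : (quarterTurn R)ᵀ * quarterTurn R = 1 := by
  rw [quarterTurn_transpose, quarterTurn, neg_mul, mul_fin_two, one_fin_two]
  simp

theorem det_quarterTurn : (quarterTurn R).det = 1 := by
  simp [quarterTurn, det_fin_two]

theorem dotProduct_quarterTurn_mulVec (u v : Fin 2 → R) :
    v ⬝ᵥ quarterTurn R *ᵥ u = (of ![v, u]).det := by
  simp [quarterTurn, det_fin_two, dotProduct, Fin.sum_univ_two, mulVec]
  ring

theorem dotProduct_quarterTurn_mulVec_self (u : Fin 2 → R) :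
    u ⬝ᵥ quarterTurn R *ᵥ u = 0 := by
  rw [dotProduct_quarterTurn_mulVec]
  exact det_zero_of_row_eq (i := 0) (j := 1) (by simp) rfl

end QuarterTurn

theorem sim_iff_dotProduct_quarterTurn_mulVec_eq_zero {u v : Fin 2 → ℝ} (hu : u ≠ 0)
    (hv : v ≠ 0) : Sim u v ↔ v ⬝ᵥ quarterTurn ℝ *ᵥ u = 0 := by
  constructor
  · rintro ⟨c, -, rfl⟩
    rw [mulVec_smul, dotProduct_smul, dotProduct_quarterTurn_mulVec_self, smul_zero]
  · intro h
    rw [dotProduct_quarterTurn_mulVec, ← exists_vecMul_eq_zero_iff] at h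
    obtain ⟨w, hw, hwvu⟩ := h
    have hcomb : w 0 • v + w 1 • u = 0 := by
      rw [← hwvu]; ext j; simp [vecMul, dotProduct, Fin.sum_univ_two]
    have hw1 : w 1 ≠ 0 := by
      intro hw1
      rw [hw1, zero_smul, add_zero, smul_eq_zero] at hcomb
      exact hw (funext fun i => by fin_cases i <;> simp [hw1, hcomb.resolve_right hv])
    have hu_eq : u = (-(w 0 / w 1)) • v := by
      rw [neg_smul, eq_neg_iff_add_eq_zero, ← smul_right_inj hw1, smul_add, smul_smul,
        mul_div_cancel₀ _ hw1, add_comm, hcomb, smul_zero]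
    refine ⟨-(w 0 / w 1), fun hc => hu ?_, hu_eq⟩
    rw [hu_eq, hc, zero_smul]

section FundamentalMatrix

variable {K : Type*} [Field K] {m n : Type*}

def fundamentalMatrix (A : Matrix (Fin 2) n K) (B : Matrix (Fin 2) m K) : Matrix m n K :=
  Bᵀ * quarterTurn K * A

theorem fundamentalMatrix_transpose (A : Matrix (Fin 2) n K) (B : Matrix (Fin 2) m K) :
    (fundamentalMatrix A B)ᵀ = -fundamentalMatrix B A := by
  simp only [fundamentalMatrix, transpose_mul, transpose_transpose, quarterTurn_transpose,
    Matrix.mul_neg, Matrix.neg_mul, Matrix.mul_assoc]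

variable [Fintype m] [Fintype n]

theorem dotProduct_fundamentalMatrix_mulVec (A : Matrix (Fin 2) n K) (B : Matrix (Fin 2) m K)
    (x : n → K) (y : m → K) :
    y ⬝ᵥ fundamentalMatrix A B *ᵥ x = B *ᵥ y ⬝ᵥ quarterTurn K *ᵥ (A *ᵥ x) := by
  rw [fundamentalMatrix, ← mulVec_mulVec, ← mulVec_mulVec, dotProduct_mulVec, vecMul_transpose]

theorem transpose_mul_quarterTurn_mulVec_injective {B : Matrix (Fin 2) m K} (hB : B.rank = 2) :
    Function.Injective (Bᵀ * quarterTurn K).mulVec := by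
  have hBt : Function.Injective Bᵀ.mulVec := by
    rw [← rank_eq_card_iff_mulVec_injective, rank_transpose, hB, Fintype.card_fin]
  have hJ : Function.Injective (quarterTurn K).mulVec :=
    mulVec_injective_iff_isUnit.2 ((isUnit_iff_isUnit_det _).2 (by simp [det_quarterTurn]))
  intro u v huv
  simp only [← mulVec_mulVec] at huv
  exact hJ (hBt huv)

theorem fundamentalMatrix_mulVec_eq_zero_iff (A : Matrix (Fin 2) n K) {B : Matrix (Fin 2) m K}
    (hB : B.rank = 2) {x : n → K} : fundamentalMatrix A B *ᵥ x = 0 ↔ A *ᵥ x = 0 := by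
  rw [fundamentalMatrix, ← mulVec_mulVec,
    (transpose_mul_quarterTurn_mulVec_injective hB).eq_iff' (mulVec_zero _)]

theorem fundamentalMatrix_transpose_mulVec_eq_zero_iff {A : Matrix (Fin 2) n K}
    (hA : A.rank = 2) (B : Matrix (Fin 2) m K) {y : m → K} :
    (fundamentalMatrix A B)ᵀ *ᵥ y = 0 ↔ B *ᵥ y = 0 := by
  rw [fundamentalMatrix_transpose, neg_mulVec, neg_eq_zero,
    fundamentalMatrix_mulVec_eq_zero_iff B hA]

theorem rank_fundamentalMatrix {A : Matrix (Fin 2) n K} {B : Matrix (Fin 2) m K}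
    (hA : A.rank = 2) (hB : B.rank = 2) : (fundamentalMatrix A B).rank = 2 := by
  rw [fundamentalMatrix,
    rank_mul_of_mulVec_injective (transpose_mul_quarterTurn_mulVec_injective hB), hA]

theorem exists_eq_fundamentalMatrix {F : Matrix m n K} (hF : F.rank = 2) :
    ∃ (A : Matrix (Fin 2) n K) (B : Matrix (Fin 2) m K),
      A.rank = 2 ∧ B.rank = 2 ∧ F = fundamentalMatrix A B := by
  obtain ⟨U, V, hU, rfl⟩ := exists_mul_eq_of_rank_eq hF
  refine ⟨V, quarterTurn K * Uᵀ, ?_, ?_, ?_⟩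
  · rwa [rank_mul_of_mulVec_injective hU] at hF
  · rw [rank_mul_eq_right_of_isUnit_det _ _ (by simp [det_quarterTurn]), rank_transpose,
      rank_eq_card_iff_mulVec_injective.2 hU, Fintype.card_fin]
  · rw [fundamentalMatrix, transpose_mul, transpose_transpose, Matrix.mul_assoc U,
      quarterTurn_transpose_mul_self, Matrix.mul_one]

end FundamentalMatrix

theorem mulVec_ne_zero_and_sim_iff {m n : Type*} [Fintype m] [Fintype n]
    {A : Matrix (Fin 2) n ℝ} {B : Matrix (Fin 2) m ℝ} (hA : A.rank = 2) (hB : B.rank = 2)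
    (x : n → ℝ) (y : m → ℝ) :
    (A *ᵥ x ≠ 0 ∧ Sim (A *ᵥ x) (B *ᵥ y)) ↔
      (y ⬝ᵥ fundamentalMatrix A B *ᵥ x = 0 ∧ fundamentalMatrix A B *ᵥ x ≠ 0 ∧
        (fundamentalMatrix A B)ᵀ *ᵥ y ≠ 0) := by
  simp only [ne_eq]
  rw [fundamentalMatrix_mulVec_eq_zero_iff A hB,
    fundamentalMatrix_transpose_mulVec_eq_zero_iff hA, dotProduct_fundamentalMatrix_mulVec]
  constructor
  · rintro ⟨hAx, hsim⟩
    have hBy : B *ᵥ y ≠ 0 := by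
      rintro hBy
      obtain ⟨c, -, hc⟩ := hsim
      exact hAx (by rw [hc, hBy, smul_zero])
    exact ⟨(sim_iff_dotProduct_quarterTurn_mulVec_eq_zero hAx hBy).1 hsim, hAx, hBy⟩
  · rintro ⟨hdot, hAx, hBy⟩
    exact ⟨hAx, (sim_iff_dotProduct_quarterTurn_mulVec_eq_zero hAx hBy).2 hdot⟩

theorem common_image_iff_fundamental_matrix_general
    (n : ℕ)
    (x y : Fin n → Fin 3 → ℝ)
    (a b : Fin 3 → ℝ) :
    (∃ A B : Matrix (Fin 2) (Fin 3) ℝ,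
        A.rank = 2 ∧ B.rank = 2 ∧ A.mulVec a = 0 ∧ B.mulVec b = 0 ∧
        ∀ i, A.mulVec (x i) ≠ 0 ∧ Sim (A.mulVec (x i)) (B.mulVec (y i)))
    ↔
    (∃ F : Matrix (Fin 3) (Fin 3) ℝ, F.rank = 2 ∧
        F.mulVec a = 0 ∧ Fᵀ.mulVec b = 0 ∧
        ∀ i, y i ⬝ᵥ F.mulVec (x i) = 0 ∧ F.mulVec (x i) ≠ 0 ∧ Fᵀ.mulVec (y i) ≠ 0) := by
  constructor
  · rintro ⟨A, B, hA, hB, hAa, hBb, hcorr⟩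
    exact ⟨fundamentalMatrix A B, rank_fundamentalMatrix hA hB,
      (fundamentalMatrix_mulVec_eq_zero_iff A hB).2 hAa,
      (fundamentalMatrix_transpose_mulVec_eq_zero_iff hA B).2 hBb,
      fun i => (mulVec_ne_zero_and_sim_iff hA hB (x i) (y i)).1 (hcorr i)⟩
  · rintro ⟨F, hF, hFa, hFb, hcorr⟩
    obtain ⟨A, B, hA, hB, rfl⟩ := exists_eq_fundamentalMatrix hF
    exact ⟨A, B, hA, hB, (fundamentalMatrix_mulVec_eq_zero_iff A hB).1 hFa,
      (fundamentalMatrix_transpose_mulVec_eq_zero_iff hA B).1 hFb,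
      fun i => (mulVec_ne_zero_and_sim_iff hA hB (x i) (y i)).2 (hcorr i)⟩

/-- Theorem 4: flatland cameras with centers `a`, `b` producing a common image of
`x i`, `y i` exist iff there is a rank-2 fundamental matrix `F`. -/
theorem common_image_iff_fundamental_matrix
    (n : ℕ) (hn : 1 ≤ n)
    (x y : Fin n → Fin 3 → ℝ)
    (hx : ∀ i, x i ≠ 0) (hy : ∀ i, y i ≠ 0)
    (a b : Fin 3 → ℝ) (ha : a ≠ 0) (hb : b ≠ 0) :
    (∃ A B : Matrix (Fin 2) (Fin 3) ℝ,
        A.rank = 2 ∧ B.rank = 2 ∧ A.mulVec a = 0 ∧ B.mulVec b = 0 ∧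
        ∀ i, A.mulVec (x i) ≠ 0 ∧ Sim (A.mulVec (x i)) (B.mulVec (y i)))
    ↔
    (∃ F : Matrix (Fin 3) (Fin 3) ℝ, F.rank = 2 ∧
        F.mulVec a = 0 ∧ Fᵀ.mulVec b = 0 ∧
        ∀ i, y i ⬝ᵥ F.mulVec (x i) = 0 ∧ F.mulVec (x i) ≠ 0 ∧ Fᵀ.mulVec (y i) ≠ 0) :=
  common_image_iff_fundamental_matrix_general n x y a b
end

section
/- Let n ≥ 1, let x₁,…,xₙ, y₁,…,yₙ ∈ ℝ³ be nonzero vectors, let a, b ∈ ℝ³ be nonzero vectors, and let A₀, B₀ be flatland cameras (real 2×3 matrices of rank 2) with A₀·a = 0, B₀·b = 0, and A₀·xᵢ ≠ 0 and B₀·yᵢ ≠ 0 for every i. Then the following are equivalent: (i) there exist flatland cameras A and B with A·a = 0 and B·b = 0 such that for every i, A·xᵢ ≠ 0 and A·xᵢ ∼ B·yᵢ; (ii) there exists an invertible real 2×2 matrix H such that for every i, H·A₀·xᵢ ∼ B₀·yᵢ. -/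
/-!
A rank-2 camera `ℝ³ → ℝ²` with center `a` has kernel exactly `ℝ a`, so two cameras with the same
center differ by an invertible `2 × 2` matrix on the left. Replacing `A`, `B` by `M A₀`, `N B₀`
turns a common image into the relation `N⁻¹ M A₀ xᵢ ∼ B₀ yᵢ`, and conversely `H A₀` and `B₀`
are cameras with a common image.
-/

open Matrix

open LinearMap Module

lemma Sim.mulVec {m k : ℕ} (P : Matrix (Fin m) (Fin k) ℝ) {u v : Fin k → ℝ} (h : Sim u v) :
    Sim (P *ᵥ u) (P *ᵥ v) := by
  obtain ⟨c, hc, rfl⟩ := h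
  exact ⟨c, hc, mulVec_smul P c v⟩

lemma LinearMap.exists_comp_eq_of_ker_le_s4 {K V W U : Type*} [Field K] [AddCommGroup V] [Module K V]
    [AddCommGroup W] [Module K W] [AddCommGroup U] [Module K U]
    (f₀ : V →ₗ[K] W) (f : V →ₗ[K] U) (hf₀ : range f₀ = ⊤) (hker : ker f₀ ≤ ker f) :
    ∃ g : W →ₗ[K] U, g ∘ₗ f₀ = f := by
  obtain ⟨s, hs⟩ := f₀.exists_rightInverse_of_surjective hf₀
  refine ⟨f ∘ₗ s, LinearMap.ext fun v => ?_⟩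
  have hv : s (f₀ v) - v ∈ ker f₀ := by
    simp [mem_ker, ← LinearMap.comp_apply f₀ s, hs]
  simpa [sub_eq_zero] using hker hv

section
variable {K : Type*} [Field K] {m n : Type*} [Fintype n]

lemma Matrix.range_mulVecLin_eq_top_of_rank_eq [Fintype m] (A : Matrix m n K)
    (hA : A.rank = Fintype.card m) :
    range A.mulVecLin = ⊤ :=
  Submodule.eq_top_of_finrank_eq (by rw [Module.finrank_fintype_fun_eq_card]; exact hA)

lemma Matrix.ker_mulVecLin_eq_span_of_rank_add_one (A : Matrix m n K)
    (hA : A.rank + 1 = Fintype.card n) {a : n → K} (ha : a ≠ 0) (hAa : A *ᵥ a = 0) :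
    ker A.mulVecLin = K ∙ a := by
  have hle : K ∙ a ≤ ker A.mulVecLin := by
    rw [Submodule.span_singleton_le_iff_mem]
    exact hAa
  refine (Submodule.eq_of_le_of_finrank_le hle ?_).symm
  have := A.mulVecLin.finrank_range_add_finrank_ker
  rw [finrank_span_singleton ha]
  simp only [Module.finrank_fintype_fun_eq_card] at this
  have : A.rank = finrank K (range A.mulVecLin) := rfl
  omega

lemma Matrix.exists_isUnit_det_mul_eq_of_ker_le [Fintype m] [DecidableEq m] (A A₀ : Matrix m n K)
    (hA : range A.mulVecLin = ⊤) (hA₀ : range A₀.mulVecLin = ⊤)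
    (hker : ker A₀.mulVecLin ≤ ker A.mulVecLin) :
    ∃ M : Matrix m m K, IsUnit M.det ∧ A = M * A₀ := by
  classical
  obtain ⟨g, hg⟩ := A₀.mulVecLin.exists_comp_eq_of_ker_le_s4 A.mulVecLin hA₀ hker
  have hfactor : A = toMatrix' g * A₀ := by
    apply toLin'.injective
    rw [toLin'_mul, toLin'_toMatrix', toLin'_apply', toLin'_apply', hg]
  refine ⟨toMatrix' g, ?_, hfactor⟩
  rw [← isUnit_iff_isUnit_det, ← mulVec_surjective_iff_isUnit]
  intro w
  obtain ⟨v, hv⟩ := range_eq_top.mp hA w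
  exact ⟨A₀ *ᵥ v, by rw [mulVec_mulVec, ← hfactor]; exact hv⟩

lemma Matrix.exists_isUnit_det_mul_eq_of_mulVec_eq_zero [Fintype m] [DecidableEq m]
    (A A₀ : Matrix m n K) (hA : A.rank = Fintype.card m) (hA₀ : A₀.rank = Fintype.card m)
    (hmn : Fintype.card m + 1 = Fintype.card n) {a : n → K} (ha : a ≠ 0)
    (hAa : A *ᵥ a = 0) (hA₀a : A₀ *ᵥ a = 0) :
    ∃ M : Matrix m m K, IsUnit M.det ∧ A = M * A₀ := by
  refine A.exists_isUnit_det_mul_eq_of_ker_le A₀ (A.range_mulVecLin_eq_top_of_rank_eq hA)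
    (A₀.range_mulVecLin_eq_top_of_rank_eq hA₀) ?_
  rw [A₀.ker_mulVecLin_eq_span_of_rank_add_one (hA₀ ▸ hmn) ha hA₀a,
    Submodule.span_singleton_le_iff_mem]
  exact hAa

end

theorem common_image_iff_orbits_coincide_general
    (n : ℕ)
    (x y : Fin n → Fin 3 → ℝ)
    (a b : Fin 3 → ℝ) (ha : a ≠ 0) (hb : b ≠ 0)
    (A₀ B₀ : Matrix (Fin 2) (Fin 3) ℝ)
    (hA₀ : A₀.rank = 2) (hB₀ : B₀.rank = 2)
    (hA₀a : A₀.mulVec a = 0) (hB₀b : B₀.mulVec b = 0)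
    (hA₀x : ∀ i, A₀.mulVec (x i) ≠ 0) :
    (∃ A B : Matrix (Fin 2) (Fin 3) ℝ,
        A.rank = 2 ∧ B.rank = 2 ∧ A.mulVec a = 0 ∧ B.mulVec b = 0 ∧
        ∀ i, A.mulVec (x i) ≠ 0 ∧ Sim (A.mulVec (x i)) (B.mulVec (y i)))
    ↔
    (∃ H : Matrix (Fin 2) (Fin 2) ℝ, H.det ≠ 0 ∧
        ∀ i, Sim (H.mulVec (A₀.mulVec (x i))) (B₀.mulVec (y i))) := by
  have h23 : Fintype.card (Fin 2) + 1 = Fintype.card (Fin 3) := rfl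
  constructor
  · rintro ⟨A, B, hA, hB, hAa, hBb, hAB⟩
    obtain ⟨M, hM, rfl⟩ :=
      A.exists_isUnit_det_mul_eq_of_mulVec_eq_zero A₀ hA hA₀ h23 ha hAa hA₀a
    obtain ⟨N, hN, rfl⟩ :=
      B.exists_isUnit_det_mul_eq_of_mulVec_eq_zero B₀ hB hB₀ h23 hb hBb hB₀b
    refine ⟨N⁻¹ * M, by simpa [det_mul] using ⟨hN.ne_zero, hM.ne_zero⟩, fun i => ?_⟩
    simpa [mulVec_mulVec, Matrix.mul_assoc, nonsing_inv_mul_cancel_left _ _ hN]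
      using (hAB i).2.mulVec N⁻¹
  · rintro ⟨H, hH, hHAB⟩
    have hHdet : IsUnit H.det := isUnit_iff_ne_zero.mpr hH
    have hHinj : Function.Injective H.mulVec :=
      mulVec_injective_iff_isUnit.mpr ((isUnit_iff_isUnit_det H).mpr hHdet)
    refine ⟨H * A₀, B₀, ?_, hB₀, ?_, hB₀b, fun i => ⟨?_, ?_⟩⟩
    · rwa [rank_mul_eq_right_of_isUnit_det H A₀ hHdet]
    · rw [← mulVec_mulVec, hA₀a, mulVec_zero]
    · rw [← mulVec_mulVec, ← mulVec_zero H]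
      exact hHinj.ne (hA₀x i)
    · rw [← mulVec_mulVec]
      exact hHAB i

/-- The unnumbered lemma of Section 3: two point sets have a common image from
centers `a` and `b` iff the GL(2)-orbits of their images under any fixed
cameras `A₀`, `B₀` with these centers coincide. -/
theorem common_image_iff_orbits_coincide
    (n : ℕ) (hn : 1 ≤ n)
    (x y : Fin n → Fin 3 → ℝ)
    (hx : ∀ i, x i ≠ 0) (hy : ∀ i, y i ≠ 0)
    (a b : Fin 3 → ℝ) (ha : a ≠ 0) (hb : b ≠ 0)
    (A₀ B₀ : Matrix (Fin 2) (Fin 3) ℝ)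
    (hA₀ : A₀.rank = 2) (hB₀ : B₀.rank = 2)
    (hA₀a : A₀.mulVec a = 0) (hB₀b : B₀.mulVec b = 0)
    (hA₀x : ∀ i, A₀.mulVec (x i) ≠ 0) (hB₀y : ∀ i, B₀.mulVec (y i) ≠ 0) :
    (∃ A B : Matrix (Fin 2) (Fin 3) ℝ,
        A.rank = 2 ∧ B.rank = 2 ∧ A.mulVec a = 0 ∧ B.mulVec b = 0 ∧
        ∀ i, A.mulVec (x i) ≠ 0 ∧ Sim (A.mulVec (x i)) (B.mulVec (y i)))
    ↔
    (∃ H : Matrix (Fin 2) (Fin 2) ℝ, H.det ≠ 0 ∧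
        ∀ i, Sim (H.mulVec (A₀.mulVec (x i))) (B₀.mulVec (y i))) :=
  common_image_iff_orbits_coincide_general n x y a b ha hb A₀ B₀ hA₀ hB₀ hA₀a hB₀b hA₀x
end

section
/- Let p₁,…,p₅ ∈ ℝ² be pairwise linearly independent nonzero vectors and let q₁,…,q₅ ∈ ℝ² be pairwise linearly independent nonzero vectors. Write [u v] for the determinant of the 2×2 matrix with columns u, v. Then there exists an invertible real 2×2 matrix H with H·pᵢ ∼ qᵢ for all i = 1,…,5 if and only if for every i ∈ {1,…,5}, writing {j₁ < j₂ < j₃ < j₄} = {1,…,5} \ {i}, one has [p_{j₁}p_{j₃}][p_{j₂}p_{j₄}][q_{j₁}q_{j₄}][q_{j₂}q_{j₃}] = [p_{j₁}p_{j₄}][p_{j₂}p_{j₃}][q_{j₁}q_{j₃}][q_{j₂}q_{j₄}]. -/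
open Matrix

/-- Determinant of the 2×2 matrix with columns `u`, `v`. -/
def det2 (u v : Fin 2 → ℝ) : ℝ := ((Matrix.of ![u, v])ᵀ).det

/-! Three points fix a projectivity of ℙ¹:
`H x = [q₁ q₂][p₀ p₂] [x p₁] q₀ + [q₀ q₂][p₁ p₂] [p₀ x] q₁` sends `p₀, p₁, p₂` to multiples of
`q₀, q₁, q₂`. It sends `p_k` to a multiple of `q_k` iff `[H p_k, q_k] = 0`, which expands to the
equality of the cross-ratios of `(p₀, p₁, p₂, p_k)` and `(q₀, q₁, q₂, q_k)`; for `k = 3, 4` these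
are the conditions at the complements of `4` and `3`. Conversely, if `H pᵢ = cᵢ qᵢ` then
`[qᵢ qⱼ] = det H [pᵢ pⱼ] / (cᵢ cⱼ)`, and these factors cancel in a cross-ratio. -/

def CrossRatioEq (u v : Fin 4 → Fin 2 → ℝ) : Prop :=
  det2 (u 0) (u 2) * det2 (u 1) (u 3) * det2 (v 0) (v 3) * det2 (v 1) (v 2) =
    det2 (u 0) (u 3) * det2 (u 1) (u 2) * det2 (v 0) (v 2) * det2 (v 1) (v 3)

section det2

variable (u v w : Fin 2 → ℝ)

theorem det2_apply : det2 u v = u 0 * v 1 - u 1 * v 0 := by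
  simp [det2, det_fin_two]

theorem det2_self : det2 u u = 0 := by
  rw [det2_apply]; ring

theorem det2_comm : det2 u v = -det2 v u := by
  rw [det2_apply, det2_apply]; ring

theorem det2_smul_add_smul_left (a b : ℝ) :
    det2 (a • u + b • v) w = a * det2 u w + b * det2 v w := by
  simp only [det2_apply, Pi.add_apply, Pi.smul_apply, smul_eq_mul]; ring

theorem det2_smul_smul (a b : ℝ) : det2 (a • u) (b • v) = a * b * det2 u v := by
  simp only [det2_apply, Pi.smul_apply, smul_eq_mul]; ring

theorem det2_mulVec (H : Matrix (Fin 2) (Fin 2) ℝ) :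
    det2 (H *ᵥ u) (H *ᵥ v) = H.det * det2 u v := by
  simp only [det2_apply, mulVec, dotProduct, Fin.sum_univ_two, det_fin_two]; ring

theorem ne_zero_of_det2_ne_zero_left {u v : Fin 2 → ℝ} (h : det2 u v ≠ 0) : u ≠ 0 := by
  rintro rfl
  simp [det2_apply] at h

end det2

theorem sim_of_det2_eq_zero {x w : Fin 2 → ℝ} (hx : x ≠ 0) (hw : w ≠ 0) (h : det2 x w = 0) :
    Sim x w := by
  have hww : w ⬝ᵥ w ≠ 0 := mt dotProduct_self_eq_zero.mp hw
  have hproj : (w ⬝ᵥ w) • x = (x ⬝ᵥ w) • w := by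
    rw [det2_apply] at h
    ext i
    fin_cases i
    · simp [dotProduct, Fin.sum_univ_two]; linear_combination w 1 * h
    · simp [dotProduct, Fin.sum_univ_two]; linear_combination -w 0 * h
  have hxw : x = (x ⬝ᵥ w / (w ⬝ᵥ w)) • w := by
    rw [div_eq_inv_mul, mul_smul, ← hproj, smul_smul, inv_mul_cancel₀ hww, one_smul]
  exact ⟨_, fun hc => hx (by rw [hxw, hc, zero_smul]), hxw⟩

theorem crossRatioEq_of_sim (u v : Fin 4 → Fin 2 → ℝ) (H : Matrix (Fin 2) (Fin 2) ℝ)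
    (h : ∀ i, Sim (H *ᵥ u i) (v i)) : CrossRatioEq u v := by
  choose c hc hcv using h
  have hrel : ∀ i j, det2 (v i) (v j) = H.det * det2 (u i) (u j) / (c i * c j) := by
    intro i j
    rw [eq_div_iff (mul_ne_zero (hc i) (hc j)), ← det2_mulVec, hcv, hcv, det2_smul_smul]
    ring
  simp only [CrossRatioEq, hrel]
  field_simp

theorem exists_mulVec_eq_det2_smul_add (u₀ u₁ v₀ v₁ : Fin 2 → ℝ) (a b : ℝ) :
    ∃ H : Matrix (Fin 2) (Fin 2) ℝ, H.det = a * b * det2 u₀ u₁ * det2 v₀ v₁ ∧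
      ∀ x, H *ᵥ x = (a * det2 x u₁) • v₀ + (b * det2 u₀ x) • v₁ := by
  refine ⟨of fun i j => a * v₀ i * ![u₁ 1, -u₁ 0] j + b * v₁ i * ![-u₀ 1, u₀ 0] j, ?_, ?_⟩
  · simp [det_fin_two, det2_apply]; ring
  · intro x
    ext i
    simp [mulVec, dotProduct, Fin.sum_univ_two, det2_apply]; ring

theorem exists_sim_of_crossRatioEq {ι : Type*} (u v : ι → Fin 2 → ℝ) (i₀ i₁ i₂ : ι)
    (hu₀₁ : det2 (u i₀) (u i₁) ≠ 0) (hu₀₂ : det2 (u i₀) (u i₂) ≠ 0)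
    (hu₁₂ : det2 (u i₁) (u i₂) ≠ 0) (hv₀₁ : det2 (v i₀) (v i₁) ≠ 0)
    (hv₀₂ : det2 (v i₀) (v i₂) ≠ 0) (hv₁₂ : det2 (v i₁) (v i₂) ≠ 0)
    (hu : ∀ k, u k ≠ 0) (hv : ∀ k, v k ≠ 0)
    (hcr : ∀ k, CrossRatioEq (u ∘ ![i₀, i₁, i₂, k]) (v ∘ ![i₀, i₁, i₂, k])) :
    ∃ H : Matrix (Fin 2) (Fin 2) ℝ, H.det ≠ 0 ∧ ∀ k, Sim (H *ᵥ u k) (v k) := by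
  obtain ⟨H, hHdet, hH⟩ := exists_mulVec_eq_det2_smul_add (u i₀) (u i₁) (v i₀) (v i₁)
    (det2 (v i₁) (v i₂) * det2 (u i₀) (u i₂)) (det2 (v i₀) (v i₂) * det2 (u i₁) (u i₂))
  have hH₀ : H.det ≠ 0 := by
    rw [hHdet]
    exact mul_ne_zero (mul_ne_zero (mul_ne_zero (mul_ne_zero hv₁₂ hu₀₂)
      (mul_ne_zero hv₀₂ hu₁₂)) hu₀₁) hv₀₁
  refine ⟨H, hH₀, fun k => sim_of_det2_eq_zero
    (fun h => hu k (eq_zero_of_mulVec_eq_zero hH₀ h)) (hv k) ?_⟩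
  have hk := hcr k
  simp only [CrossRatioEq, Function.comp_apply, cons_val] at hk
  rw [hH, det2_smul_add_smul_left, det2_comm (u k)]
  linear_combination -hk

/-- Lemma 25: five labeled points on ℙ¹ are projectively equivalent to another
five iff all five four-point cross-ratios of complements coincide.  For
`i : Fin 5`, the map `i.succAbove : Fin 4 → Fin 5` enumerates the complement
`{1,…,5} \ {i}` in increasing order. -/
theorem five_points_projectively_equivalent_iff_cross_ratios
    (p q : Fin 5 → Fin 2 → ℝ)
    (hp : ∀ i j, i ≠ j → det2 (p i) (p j) ≠ 0)
    (hq : ∀ i j, i ≠ j → det2 (q i) (q j) ≠ 0) :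
    (∃ H : Matrix (Fin 2) (Fin 2) ℝ, H.det ≠ 0 ∧
        ∀ i, Sim (H.mulVec (p i)) (q i))
    ↔
    (∀ i : Fin 5,
      det2 (p (i.succAbove 0)) (p (i.succAbove 2)) *
        det2 (p (i.succAbove 1)) (p (i.succAbove 3)) *
        det2 (q (i.succAbove 0)) (q (i.succAbove 3)) *
        det2 (q (i.succAbove 1)) (q (i.succAbove 2))
      = det2 (p (i.succAbove 0)) (p (i.succAbove 3)) *
          det2 (p (i.succAbove 1)) (p (i.succAbove 2)) *
          det2 (q (i.succAbove 0)) (q (i.succAbove 2)) *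
          det2 (q (i.succAbove 1)) (q (i.succAbove 3))) := by
  change _ ↔ ∀ i : Fin 5, CrossRatioEq (p ∘ i.succAbove) (q ∘ i.succAbove)
  constructor
  · rintro ⟨H, -, hH⟩ i
    exact crossRatioEq_of_sim _ _ H fun j => hH _
  · intro hcr
    have hp₀ (k : Fin 5) : p k ≠ 0 :=
      ne_zero_of_det2_ne_zero_left (hp k _ (Fin.succAbove_ne k 0).symm)
    have hq₀ (k : Fin 5) : q k ≠ 0 :=
      ne_zero_of_det2_ne_zero_left (hq k _ (Fin.succAbove_ne k 0).symm)
    refine exists_sim_of_crossRatioEq p q 0 1 2 (hp 0 1 (by decide)) (hp 0 2 (by decide))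
      (hp 1 2 (by decide)) (hq 0 1 (by decide)) (hq 0 2 (by decide)) (hq 1 2 (by decide))
      hp₀ hq₀ fun k => ?_
    fin_cases k
    iterate 3 simp [CrossRatioEq, det2_self]
    · simpa [show (4 : Fin 5).succAbove = ![0, 1, 2, 3] by decide] using hcr 4
    · simpa [show (3 : Fin 5).succAbove = ![0, 1, 2, 4] by decide] using hcr 3
end

section
/- Let x₁,…,x₄, a ∈ ℝ³ and y₁,…,y₄, b ∈ ℝ³ be vectors such that det[xᵢ xⱼ a] ≠ 0 and det[yᵢ yⱼ b] ≠ 0 for all 1 ≤ i < j ≤ 4, where det[u v w] is the determinant of the 3×3 matrix with columns u, v, w. Then there exist flatland cameras A and B (real 2×3 matrices of rank 2) with A·a = 0 and B·b = 0 such that A·xᵢ ∼ B·yᵢ for all i = 1,…,4, if and only if det[x₁x₃a]·det[x₂x₄a]·det[y₁y₄b]·det[y₂y₃b] = det[x₁x₄a]·det[x₂x₃a]·det[y₁y₃b]·det[y₂y₄b]. -/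
open Matrix

/-- Determinant of the 3×3 matrix with columns `u`, `v`, `w`. -/
def det3 (u v w : Fin 3 → ℝ) : ℝ := ((Matrix.of ![u, v, w])ᵀ).det

/-!
A rank-2 camera `A` with center `a` has both rows orthogonal to `a`, so the cross product of its
rows is a nonzero multiple `l • a`, and the Lagrange identity turns this into
`det [A u, A v] = l * det3 u v a`. Hence if `A (x i) = c i • B (y i)`, then
`det3 (x i) (x j) a = ρ * c i * c j * det3 (y i) (y j) b` for a constant `ρ`, and the scalars cancel
from the cross-ratio.

Conversely, the camera `u ↦ (det3 u (x 1) a, det3 (x 0) u a)` has center `a` and sends `x 0`, `x 1`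
to the coordinate axes. Rescaling the two coordinates of the analogous camera for the `y`s so that
`x 2` and `y 2` get the same image, `x 3` and `y 3` get the same image exactly when the cross-ratios
agree.
-/

theorem det3_eq_dotProduct_cross (u v w : Fin 3 → ℝ) : det3 u v w = u ⬝ᵥ v ⨯₃ w := by
  rw [det3, det_transpose, triple_product_eq_det]
  rfl

theorem det3_rotate (u v w : Fin 3 → ℝ) : det3 u v w = det3 v w u := by
  simp only [det3_eq_dotProduct_cross, triple_product_permutation u]

theorem det3_swap (u v w : Fin 3 → ℝ) : det3 v u w = -det3 u v w := by
  rw [det3_eq_dotProduct_cross, det3_eq_dotProduct_cross, triple_product_permutation u,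
    ← cross_anticomm w u, dotProduct_neg]

theorem det3_self_left (u w : Fin 3 → ℝ) : det3 u u w = 0 := by
  rw [det3_eq_dotProduct_cross, dot_self_cross]

theorem det3_self_middle (u v : Fin 3 → ℝ) : det3 u v v = 0 := by
  rw [det3_eq_dotProduct_cross, cross_self, dotProduct_zero]

theorem det3_self_right (u v : Fin 3 → ℝ) : det3 u v u = 0 := by
  rw [det3_rotate, det3_self_middle]

theorem right_ne_zero_of_det3_ne_zero {u v a : Fin 3 → ℝ} (h : det3 u v a ≠ 0) : a ≠ 0 := by
  rintro rfl
  simp [det3_eq_dotProduct_cross] at h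

theorem det3_ne_zero_of_ne {ι : Type*} [LinearOrder ι] {x : ι → Fin 3 → ℝ} {a : Fin 3 → ℝ}
    (hx : ∀ i j, i < j → det3 (x i) (x j) a ≠ 0) {i j : ι} (hij : i ≠ j) :
    det3 (x i) (x j) a ≠ 0 := by
  rcases hij.lt_or_gt with h | h
  · exact hx i j h
  · rw [det3_swap, neg_ne_zero]
    exact hx j i h

theorem rank_eq_two_iff_cross_ne_zero {F : Type*} [Field F] (A : Matrix (Fin 2) (Fin 3) F) :
    A.rank = 2 ↔ A 0 ⨯₃ A 1 ≠ 0 := by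
  have hrow : A.row = ![A 0, A 1] := by
    ext i : 1
    fin_cases i <;> rfl
  rw [crossProduct_ne_zero_iff_linearIndependent, ← hrow,
    linearIndependent_iff_card_eq_finrank_span, rank_eq_finrank_span_row, Fintype.card_fin,
    Set.finrank, eq_comm]

theorem exists_cross_eq_smul_of_dotProduct_eq_zero {r s a : Fin 3 → ℝ} (ha : a ≠ 0)
    (hr : r ⬝ᵥ a = 0) (hs : s ⬝ᵥ a = 0) : ∃ l : ℝ, r ⨯₃ s = l • a := by
  have hperp : r ⨯₃ s ⨯₃ a = 0 := by
    rw [cross_cross_eq_smul_sub_smul, hr, hs, zero_smul, zero_smul, sub_zero]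
  have haa : a ⬝ᵥ a ≠ 0 := dotProduct_self_eq_zero.not.mpr ha
  refine ⟨(r ⨯₃ s ⬝ᵥ a) / (a ⬝ᵥ a), ?_⟩
  have key := cross_cross_eq_smul_sub_smul' a (r ⨯₃ s) a
  rw [hperp, map_zero, eq_comm, sub_eq_zero] at key
  rw [div_eq_inv_mul, mul_smul, ← key, inv_smul_smul₀ haa]

theorem det_of_mulVec_mulVec (A : Matrix (Fin 2) (Fin 3) ℝ) (u v : Fin 3 → ℝ) :
    (of ![A *ᵥ u, A *ᵥ v]).det = A 0 ⨯₃ A 1 ⬝ᵥ u ⨯₃ v := by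
  rw [cross_dot_cross, det_fin_two]
  simp only [of_apply, cons_val_zero, cons_val_one, mulVec]
  ring

theorem exists_det_of_mulVec_mulVec_eq_mul_det3 {A : Matrix (Fin 2) (Fin 3) ℝ} {a : Fin 3 → ℝ}
    (hA : A.rank = 2) (ha : a ≠ 0) (hAa : A *ᵥ a = 0) :
    ∃ l ≠ 0, ∀ u v, (of ![A *ᵥ u, A *ᵥ v]).det = l * det3 u v a := by
  obtain ⟨l, hl⟩ :=
    exists_cross_eq_smul_of_dotProduct_eq_zero ha (congrFun hAa 0) (congrFun hAa 1)
  refine ⟨l, ?_, fun u v => ?_⟩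
  · rintro rfl
    rw [zero_smul] at hl
    exact (rank_eq_two_iff_cross_ne_zero A).mp hA hl
  · rw [det_of_mulVec_mulVec, hl, smul_dotProduct, smul_eq_mul, ← det3_rotate a,
      det3_eq_dotProduct_cross]

theorem mulVec_ne_zero_of_det3_ne_zero {A : Matrix (Fin 2) (Fin 3) ℝ} {a u v : Fin 3 → ℝ}
    (hA : A.rank = 2) (ha : a ≠ 0) (hAa : A *ᵥ a = 0) (huv : det3 u v a ≠ 0) : A *ᵥ u ≠ 0 := by
  obtain ⟨l, hl, hdet⟩ := exists_det_of_mulVec_mulVec_eq_mul_det3 hA ha hAa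
  intro hu
  refine mul_ne_zero hl huv ?_
  rw [← hdet u v, hu]
  simp [det_fin_two]

theorem exists_det3_eq_mul_of_sim {ι : Type*} {x y : ι → Fin 3 → ℝ} {a b : Fin 3 → ℝ}
    {A B : Matrix (Fin 2) (Fin 3) ℝ} (hA : A.rank = 2) (hB : B.rank = 2) (ha : a ≠ 0)
    (hb : b ≠ 0) (hAa : A *ᵥ a = 0) (hBb : B *ᵥ b = 0)
    (hsim : ∀ i, Sim (A *ᵥ x i) (B *ᵥ y i)) :
    ∃ (ρ : ℝ) (c : ι → ℝ), ∀ i j, det3 (x i) (x j) a = ρ * c i * c j * det3 (y i) (y j) b := by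
  obtain ⟨lA, hlA, hdetA⟩ := exists_det_of_mulVec_mulVec_eq_mul_det3 hA ha hAa
  obtain ⟨lB, -, hdetB⟩ := exists_det_of_mulVec_mulVec_eq_mul_det3 hB hb hBb
  choose c _ hc using hsim
  refine ⟨lB / lA, c, fun i j => ?_⟩
  have hx := hdetA (x i) (x j)
  have hy := hdetB (y i) (y j)
  rw [hc i, hc j] at hx
  simp only [det_fin_two, of_apply, cons_val_zero, cons_val_one, Pi.smul_apply, smul_eq_mul]
    at hx hy
  field_simp
  linear_combination -hx + c i * c j * hy

theorem sim_of_det_eq_zero {p q : Fin 2 → ℝ} (hp : p ≠ 0) (hq : q ≠ 0)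
    (h : (of ![p, q]).det = 0) : Sim p q := by
  have hdep : ¬LinearIndependent ℝ (of ![p, q]).row := by
    rw [linearIndependent_rows_iff_isUnit, isUnit_iff_isUnit_det, h]
    exact not_isUnit_zero
  obtain ⟨c, rfl⟩ : ∃ c : ℝ, c • p = q := by
    by_contra! hne
    exact hdep ((LinearIndependent.pair_iff' hp).mpr hne)
  have hc : c ≠ 0 := by rintro rfl; simp at hq
  exact ⟨c⁻¹, inv_ne_zero hc, by rw [smul_smul, inv_mul_cancel₀ hc, one_smul]⟩

def bracketCamera (p q a : Fin 3 → ℝ) : Matrix (Fin 2) (Fin 3) ℝ := of ![q ⨯₃ a, a ⨯₃ p]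

theorem bracketCamera_mulVec (p q a u : Fin 3 → ℝ) :
    bracketCamera p q a *ᵥ u = ![det3 u q a, det3 p u a] := by
  ext i
  fin_cases i
  · change q ⨯₃ a ⬝ᵥ u = det3 u q a
    rw [dotProduct_comm, det3_eq_dotProduct_cross]
  · change a ⨯₃ p ⬝ᵥ u = det3 p u a
    rw [dotProduct_comm, det3_rotate, det3_eq_dotProduct_cross]

theorem bracketCamera_mulVec_self (p q a : Fin 3 → ℝ) : bracketCamera p q a *ᵥ a = 0 := by
  rw [bracketCamera_mulVec, det3_self_right, det3_self_middle]
  simp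

theorem rank_bracketCamera {p q a : Fin 3 → ℝ} (h : det3 p q a ≠ 0) :
    (bracketCamera p q a).rank = 2 := by
  have hcross : bracketCamera p q a 0 ⨯₃ bracketCamera p q a 1 = det3 p q a • a := by
    change q ⨯₃ a ⨯₃ (a ⨯₃ p) = _
    rw [cross_cross_eq_smul_sub_smul', dot_cross_self, zero_smul, sub_zero, dotProduct_comm,
      ← det3_eq_dotProduct_cross]
  rw [rank_eq_two_iff_cross_ne_zero, hcross, smul_ne_zero_iff]
  exact ⟨h, right_ne_zero_of_det3_ne_zero h⟩

theorem exists_common_image_of_bracket_eq (x y : Fin 4 → Fin 3 → ℝ) (a b : Fin 3 → ℝ)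
    (hx : ∀ i j, i < j → det3 (x i) (x j) a ≠ 0)
    (hy : ∀ i j, i < j → det3 (y i) (y j) b ≠ 0)
    (h : det3 (x 0) (x 2) a * det3 (x 1) (x 3) a * det3 (y 0) (y 3) b * det3 (y 1) (y 2) b
      = det3 (x 0) (x 3) a * det3 (x 1) (x 2) a * det3 (y 0) (y 2) b * det3 (y 1) (y 3) b) :
    ∃ A B : Matrix (Fin 2) (Fin 3) ℝ, A.rank = 2 ∧ B.rank = 2 ∧ A *ᵥ a = 0 ∧ B *ᵥ b = 0 ∧
      ∀ i, Sim (A *ᵥ x i) (B *ᵥ y i) := by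
  have ha := right_ne_zero_of_det3_ne_zero (hx 0 1 (by decide))
  have hb := right_ne_zero_of_det3_ne_zero (hy 0 1 (by decide))
  have hy02 := hy 0 2 (by decide)
  have hy12 := hy 1 2 (by decide)
  set A := bracketCamera (x 0) (x 1) a
  set B := diagonal ![det3 (x 1) (x 2) a / det3 (y 1) (y 2) b,
    det3 (x 0) (x 2) a / det3 (y 0) (y 2) b] * bracketCamera (y 0) (y 1) b
  have hA : A.rank = 2 := rank_bracketCamera (hx 0 1 (by decide))
  have hAa : A *ᵥ a = 0 := bracketCamera_mulVec_self _ _ _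
  have hB : B.rank = 2 := by
    rw [rank_mul_eq_right_of_isUnit_det, rank_bracketCamera (hy 0 1 (by decide))]
    rw [det_diagonal, Fin.prod_univ_two, isUnit_iff_ne_zero]
    simp [hx 0 2 (by decide), hx 1 2 (by decide), hy02, hy12]
  have hBb : B *ᵥ b = 0 := by rw [← mulVec_mulVec, bracketCamera_mulVec_self, mulVec_zero]
  have hframe : ∀ i,
      det3 (x i) (x 1) a * det3 (x 0) (x 2) a * det3 (y 0) (y i) b * det3 (y 1) (y 2) b
      = det3 (x 0) (x i) a * det3 (x 1) (x 2) a * det3 (y i) (y 1) b * det3 (y 0) (y 2) b := by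
    intro i
    fin_cases i <;> simp only [Fin.zero_eta, Fin.mk_one, Fin.reduceFinMk, det3_self_left, mul_zero,
      zero_mul]
    · rw [det3_swap (x 1), det3_swap (y 1)]
      ring
    · rw [det3_swap (x 1), det3_swap (y 1)]
      linear_combination -h
  refine ⟨A, B, hA, hB, hAa, hBb, fun i => ?_⟩
  obtain ⟨j, hj⟩ := exists_ne i
  refine sim_of_det_eq_zero
    (mulVec_ne_zero_of_det3_ne_zero hA ha hAa (det3_ne_zero_of_ne hx hj.symm))
    (mulVec_ne_zero_of_det3_ne_zero hB hb hBb (det3_ne_zero_of_ne hy hj.symm)) ?_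
  rw [← mulVec_mulVec, bracketCamera_mulVec, bracketCamera_mulVec, det_fin_two]
  simp only [mulVec_diagonal, of_apply, cons_val_zero, cons_val_one]
  field_simp
  linear_combination hframe i

/-- The key equivalence of Theorem 19 (n = 4): four labeled point pairs admit a
common image from centers `a` and `b` exactly when the planar cross-ratios
around `a` and around `b` agree (in cross-multiplied bracket form). -/
theorem four_points_common_image_iff_planar_cross_ratios
    (x y : Fin 4 → Fin 3 → ℝ) (a b : Fin 3 → ℝ)
    (hx : ∀ i j, i < j → det3 (x i) (x j) a ≠ 0)
    (hy : ∀ i j, i < j → det3 (y i) (y j) b ≠ 0) :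
    (∃ A B : Matrix (Fin 2) (Fin 3) ℝ,
        A.rank = 2 ∧ B.rank = 2 ∧ A.mulVec a = 0 ∧ B.mulVec b = 0 ∧
        ∀ i, Sim (A.mulVec (x i)) (B.mulVec (y i)))
    ↔
    det3 (x 0) (x 2) a * det3 (x 1) (x 3) a * det3 (y 0) (y 3) b * det3 (y 1) (y 2) b
      = det3 (x 0) (x 3) a * det3 (x 1) (x 2) a * det3 (y 0) (y 2) b * det3 (y 1) (y 3) b := by
  refine ⟨fun ⟨A, B, hA, hB, hAa, hBb, hsim⟩ => ?_, exists_common_image_of_bracket_eq x y a b hx hy⟩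
  have ha := right_ne_zero_of_det3_ne_zero (hx 0 1 (by decide))
  have hb := right_ne_zero_of_det3_ne_zero (hy 0 1 (by decide))
  obtain ⟨ρ, c, hρ⟩ := exists_det3_eq_mul_of_sim hA hB ha hb hAa hBb hsim
  rw [hρ 0 2, hρ 1 3, hρ 0 3, hρ 1 2]
  ring
end

section
/- Let a, b ∈ ℝ³ have all coordinates nonzero, and set F₀ = diag(a)·[a⊙b]_×·diag(b). Then: (1) F₀ has rank 2; (2) F₀·a = 0 and F₀ᵀ·b = 0; (3) eᵢᵀ·F₀·eᵢ = 0 for i = 1, 2, 3, and e₄ᵀ·F₀·e₄ = aᵀ·[a⊙b]_×·b = a₃(a₁−a₂)b₁b₂ + a₂(a₃−a₁)b₁b₃ + a₁(a₂−a₃)b₂b₃; (4) every real 3×3 matrix F with F·a = 0, Fᵀ·b = 0, and eᵢᵀ·F·eᵢ = 0 for i = 1, 2, 3 is a scalar multiple of F₀; consequently, there exists a real 3×3 matrix F of rank 2 with F·a = 0, Fᵀ·b = 0, and eᵢᵀ·F·eᵢ = 0 for i = 1, 2, 3, 4, if and only if a₃(a₁−a₂)b₁b₂ + a₂(a₃−a₁)b₁b₃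 + a₁(a₂−a₃)b₂b₃ = 0. -/
/-!
Scaling rows by `a⁻¹` and columns by `b⁻¹` turns the constraints on `F` into constraints on
`G = diag(a)⁻¹ F diag(b)⁻¹`: zero diagonal and `G v = Gᵀ v = 0` for `v = a ⊙ b`. Since every
`vᵢ ≠ 0`, these force `G` to be skew-symmetric, i.e. `G = [w]ₓ`, and then `w × v = 0` makes `w`
a multiple of `v`; so `F` is a multiple of `F₀ = diag(a) [v]ₓ diag(b)`. The same kernel
computation `ker [v]ₓ = ℝ v` gives `rank F₀ = 2`, and `e₄ᵀ (c F₀) e₄ = c · aᵀ [v]ₓ b`.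
-/

open Matrix

/-- The 3×3 skew-symmetric matrix `[v]ₓ` of the cross product: `[v]ₓ · u = v × u`. -/
def crossMat (v : Fin 3 → ℝ) : Matrix (Fin 3) (Fin 3) ℝ :=
  !![0, -v 2, v 1; v 2, 0, -v 0; -v 1, v 0, 0]

theorem diagonal_mulVec_eq_mul {m α : Type*} [Fintype m] [DecidableEq m]
    [NonUnitalNonAssocSemiring α] (v w : m → α) : diagonal v *ᵥ w = v * w :=
  funext (mulVec_diagonal v w)

theorem single_one_dotProduct_mulVec_single_one {n α : Type*} [Fintype n] [DecidableEq n]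
    [NonAssocSemiring α] (M : Matrix n n α) (i j : n) :
    Pi.single i 1 ⬝ᵥ M *ᵥ Pi.single j 1 = M i j := by
  simp

theorem crossMat_mulVec (v u : Fin 3 → ℝ) : crossMat v *ᵥ u = v ⨯₃ u := by
  ext i
  fin_cases i <;>
    simp only [crossMat, cross_apply, mulVec, dotProduct, Fin.sum_univ_three, Fin.isValue,
      Fin.zero_eta, Fin.mk_one, Fin.reduceFinMk, of_apply, cons_val', cons_val_fin_one,
      cons_val_zero, cons_val_one, cons_val, Nat.succ_eq_add_one, Nat.reduceAdd] <;>
    ring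

theorem crossMat_transpose (v : Fin 3 → ℝ) : (crossMat v)ᵀ = -crossMat v := by
  ext i j
  fin_cases i <;> fin_cases j <;> simp [crossMat]

theorem crossMat_apply_self (v : Fin 3 → ℝ) (i : Fin 3) : crossMat v i i = 0 := by
  fin_cases i <;> simp [crossMat]

theorem crossMat_smul (c : ℝ) (v : Fin 3 → ℝ) : crossMat (c • v) = c • crossMat v := by
  ext i j
  fin_cases i <;> fin_cases j <;> simp [crossMat]

theorem cross_eq_zero_iff {K : Type*} [Field K] {v w : Fin 3 → K} (hv : v ≠ 0) :
    v ⨯₃ w = 0 ↔ ∃ c : K, c • v = w := by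
  rw [← not_iff_not, ← Ne, crossProduct_ne_zero_iff_linearIndependent,
    LinearIndependent.pair_iff' hv]
  exact not_exists.symm

theorem ker_crossMat {v : Fin 3 → ℝ} (hv : v ≠ 0) :
    LinearMap.ker (crossMat v).mulVecLin = ℝ ∙ v := by
  ext u
  rw [LinearMap.mem_ker, mulVecLin_apply, crossMat_mulVec, cross_eq_zero_iff hv,
    Submodule.mem_span_singleton]

theorem rank_crossMat {v : Fin 3 → ℝ} (hv : v ≠ 0) : (crossMat v).rank = 2 := by
  have h := LinearMap.finrank_range_add_finrank_ker (crossMat v).mulVecLin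
  rw [ker_crossMat hv, finrank_span_singleton hv, Module.finrank_fin_fun] at h
  rw [rank]
  omega

theorem eq_crossMat_of_transpose_eq_neg {G : Matrix (Fin 3) (Fin 3) ℝ} (hG : Gᵀ = -G) :
    G = crossMat ![G 2 1, G 0 2, G 1 0] := by
  have h i j : G j i = -G i j := congrFun (congrFun hG i) j
  ext i j
  fin_cases i <;> fin_cases j <;>
    simp only [crossMat, Fin.isValue, Fin.zero_eta, Fin.mk_one, Fin.reduceFinMk, of_apply,
      cons_val', cons_val_fin_one, cons_val_zero, cons_val_one, cons_val] <;>
    linarith [h 0 0, h 1 1, h 2 2, h 1 0, h 2 1, h 0 2]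

theorem transpose_eq_neg_of_mulVec_eq_zero {K : Type*} [Field K] [NeZero (2 : K)]
    {G : Matrix (Fin 3) (Fin 3) K} {v : Fin 3 → K} (hdiag : ∀ i, G i i = 0)
    (hv : ∀ i, v i ≠ 0) (hG : G *ᵥ v = 0) (hGt : Gᵀ *ᵥ v = 0) : Gᵀ = -G := by
  have row i : ∑ j, G i j * v j = 0 := congrFun hG i
  have col i : ∑ j, G j i * v j = 0 := congrFun hGt i
  simp only [Fin.sum_univ_three] at row col
  have r0 := row 0; have r1 := row 1; have r2 := row 2
  have c0 := col 0; have c1 := col 1; have c2 := col 2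
  simp only [hdiag, zero_mul, zero_add, add_zero] at r0 r1 r2 c0 c1 c2
  -- the symmetric part `S = G + Gᵀ` satisfies `S v = 0`, a system of determinant `-2 v₀ v₁ v₂`
  have s01 : (G 0 1 + G 1 0) * (2 * v 0 * v 1) = 0 := by
    linear_combination v 0 * (r0 + c0) + v 1 * (r1 + c1) - v 2 * (r2 + c2)
  have s02 : (G 0 2 + G 2 0) * (2 * v 0 * v 2) = 0 := by
    linear_combination v 0 * (r0 + c0) - v 1 * (r1 + c1) + v 2 * (r2 + c2)
  have s12 : (G 1 2 + G 2 1) * (2 * v 1 * v 2) = 0 := by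
    linear_combination -v 0 * (r0 + c0) + v 1 * (r1 + c1) + v 2 * (r2 + c2)
  simp only [mul_eq_zero, two_ne_zero, hv, or_false] at s01 s02 s12
  ext i j
  fin_cases i <;> fin_cases j <;>
    simp only [Fin.zero_eta, Fin.mk_one, Fin.reduceFinMk, transpose_apply, Matrix.neg_apply,
      hdiag, neg_zero] <;>
    first | linear_combination s01 | linear_combination s02 | linear_combination s12

theorem eq_smul_crossMat_of_mulVec_eq_zero {G : Matrix (Fin 3) (Fin 3) ℝ} {v : Fin 3 → ℝ}
    (hdiag : ∀ i, G i i = 0) (hv : ∀ i, v i ≠ 0) (hG : G *ᵥ v = 0) (hGt : Gᵀ *ᵥ v = 0) :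
    ∃ c : ℝ, G = c • crossMat v := by
  set w : Fin 3 → ℝ := ![G 2 1, G 0 2, G 1 0]
  have hGw : G = crossMat w :=
    eq_crossMat_of_transpose_eq_neg (transpose_eq_neg_of_mulVec_eq_zero hdiag hv hG hGt)
  have hv0 : v ≠ 0 := fun h => hv 0 (congrFun h 0)
  have hvw : v ⨯₃ w = 0 := by
    rw [← cross_anticomm, ← crossMat_mulVec, ← hGw, hG, neg_zero]
  obtain ⟨c, hc⟩ := (cross_eq_zero_iff hv0).1 hvw
  exact ⟨c, by rw [hGw, ← hc, crossMat_smul]⟩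

def standardFundamentalMatrix (a b : Fin 3 → ℝ) : Matrix (Fin 3) (Fin 3) ℝ :=
  diagonal a * crossMat (a * b) * diagonal b

section
variable (a b : Fin 3 → ℝ)

theorem standardFundamentalMatrix_mulVec_self :
    standardFundamentalMatrix a b *ᵥ a = 0 := by
  rw [standardFundamentalMatrix, ← mulVec_mulVec, ← mulVec_mulVec, diagonal_mulVec_eq_mul b,
    mul_comm b, crossMat_mulVec, cross_self, mulVec_zero]

theorem standardFundamentalMatrix_transpose :
    (standardFundamentalMatrix a b)ᵀ = -standardFundamentalMatrix b a := by
  rw [standardFundamentalMatrix, standardFundamentalMatrix, transpose_mul, transpose_mul,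
    diagonal_transpose, diagonal_transpose, crossMat_transpose, mul_comm a]
  simp [Matrix.mul_assoc]

theorem standardFundamentalMatrix_apply_self (i : Fin 3) :
    standardFundamentalMatrix a b i i = 0 := by
  simp [standardFundamentalMatrix, crossMat_apply_self]

theorem standardFundamentalMatrix_transpose_mulVec :
    (standardFundamentalMatrix a b)ᵀ *ᵥ b = 0 := by
  rw [standardFundamentalMatrix_transpose, neg_mulVec, standardFundamentalMatrix_mulVec_self,
    neg_zero]

theorem one_dotProduct_standardFundamentalMatrix_mulVec_one :
    (fun _ => 1) ⬝ᵥ standardFundamentalMatrix a b *ᵥ (fun _ => 1) =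
      a ⬝ᵥ crossMat (a * b) *ᵥ b := by
  rw [standardFundamentalMatrix, ← mulVec_mulVec, ← mulVec_mulVec, diagonal_mulVec_eq_mul,
    diagonal_mulVec_eq_mul]
  simp [dotProduct, Pi.mul_def]

theorem dotProduct_crossMat_mul_mulVec :
    a ⬝ᵥ crossMat (a * b) *ᵥ b
      = a 2 * (a 0 - a 1) * b 0 * b 1 + a 1 * (a 2 - a 0) * b 0 * b 2
          + a 0 * (a 1 - a 2) * b 1 * b 2 := by
  simp only [crossMat_mulVec, cross_apply, dotProduct, Fin.sum_univ_three, Pi.mul_apply,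
    cons_val_zero, cons_val_one, cons_val]
  ring

end

section
variable {a b : Fin 3 → ℝ}

theorem rank_standardFundamentalMatrix (ha : ∀ i, a i ≠ 0) (hb : ∀ i, b i ≠ 0) :
    (standardFundamentalMatrix a b).rank = 2 := by
  have hunit {v : Fin 3 → ℝ} (hv : ∀ i, v i ≠ 0) : IsUnit (diagonal v).det := by
    simpa [det_diagonal, Finset.prod_ne_zero_iff] using hv
  have hab : a * b ≠ 0 := fun h => mul_ne_zero (ha 0) (hb 0) (congrFun h 0)
  rw [standardFundamentalMatrix, rank_mul_eq_left_of_isUnit_det _ _ (hunit hb),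
    rank_mul_eq_right_of_isUnit_det _ _ (hunit ha), rank_crossMat hab]

theorem eq_smul_standardFundamentalMatrix (ha : ∀ i, a i ≠ 0) (hb : ∀ i, b i ≠ 0)
    {F : Matrix (Fin 3) (Fin 3) ℝ} (hFa : F *ᵥ a = 0) (hFb : Fᵀ *ᵥ b = 0)
    (hdiag : ∀ i, F i i = 0) :
    ∃ c : ℝ, F = c • standardFundamentalMatrix a b := by
  set G := diagonal a⁻¹ * F * diagonal b⁻¹
  have hFG : F = diagonal a * G * diagonal b := by
    ext i j
    simp only [G, diagonal_mul, mul_diagonal, Pi.inv_apply]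
    field_simp [ha i, hb j]
  have hG : G *ᵥ (a * b) = 0 := by
    have hba : b⁻¹ * (a * b) = a := by
      ext i
      simp only [Pi.mul_apply, Pi.inv_apply]
      field_simp [hb i]
    rw [← mulVec_mulVec, ← mulVec_mulVec, diagonal_mulVec_eq_mul b⁻¹, hba, hFa, mulVec_zero]
  have hGt : Gᵀ *ᵥ (a * b) = 0 := by
    have hab : a⁻¹ * (a * b) = b := by
      ext i
      simp only [Pi.mul_apply, Pi.inv_apply]
      field_simp [ha i]
    rw [transpose_mul, transpose_mul, diagonal_transpose, diagonal_transpose, ← mulVec_mulVec,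
      ← mulVec_mulVec, diagonal_mulVec_eq_mul a⁻¹, hab, hFb, mulVec_zero]
  have hGdiag (i : Fin 3) : G i i = 0 := by simp [G, diagonal_mul, mul_diagonal, hdiag]
  obtain ⟨c, hc⟩ := eq_smul_crossMat_of_mulVec_eq_zero (v := a * b) hGdiag
    (fun i => mul_ne_zero (ha i) (hb i)) hG hGt
  exact ⟨c, by rw [hFG, hc, standardFundamentalMatrix, Matrix.mul_smul, Matrix.smul_mul]⟩

end

/-- Theorem 21 part (1) (n = 4, standard position): with
`F₀ = diag(a)·[a⊙b]ₓ·diag(b)`, the matrix `F₀` is the essentially unique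
matrix satisfying the first three incidence constraints with epipoles `a`, `b`;
a rank-2 fundamental matrix also satisfying the fourth constraint `e₄ᵀFe₄ = 0`
exists iff `aᵀ[a⊙b]ₓb = 0`. -/
theorem standard_position_four_points_hypersurface
    (a b : Fin 3 → ℝ) (ha : ∀ i, a i ≠ 0) (hb : ∀ i, b i ≠ 0) :
    let F₀ : Matrix (Fin 3) (Fin 3) ℝ :=
      Matrix.diagonal a * crossMat (a * b) * Matrix.diagonal b
    F₀.rank = 2 ∧
    F₀.mulVec a = 0 ∧ F₀ᵀ.mulVec b = 0 ∧
    (∀ i : Fin 3, Pi.single i (1 : ℝ) ⬝ᵥ F₀.mulVec (Pi.single i (1 : ℝ)) = 0) ∧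
    ((fun _ : Fin 3 => (1 : ℝ)) ⬝ᵥ F₀.mulVec (fun _ => (1 : ℝ))
        = a ⬝ᵥ (crossMat (a * b)).mulVec b) ∧
    (a ⬝ᵥ (crossMat (a * b)).mulVec b
        = a 2 * (a 0 - a 1) * b 0 * b 1 + a 1 * (a 2 - a 0) * b 0 * b 2
            + a 0 * (a 1 - a 2) * b 1 * b 2) ∧
    (∀ F : Matrix (Fin 3) (Fin 3) ℝ,
        F.mulVec a = 0 → Fᵀ.mulVec b = 0 →
        (∀ i : Fin 3, Pi.single i (1 : ℝ) ⬝ᵥ F.mulVec (Pi.single i (1 : ℝ)) = 0) →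
        ∃ c : ℝ, F = c • F₀) ∧
    ((∃ F : Matrix (Fin 3) (Fin 3) ℝ, F.rank = 2 ∧
        F.mulVec a = 0 ∧ Fᵀ.mulVec b = 0 ∧
        (∀ i : Fin 3, Pi.single i (1 : ℝ) ⬝ᵥ F.mulVec (Pi.single i (1 : ℝ)) = 0) ∧
        (fun _ : Fin 3 => (1 : ℝ)) ⬝ᵥ F.mulVec (fun _ => (1 : ℝ)) = 0)
      ↔ a 2 * (a 0 - a 1) * b 0 * b 1 + a 1 * (a 2 - a 0) * b 0 * b 2
          + a 0 * (a 1 - a 2) * b 1 * b 2 = 0) := by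
  intro F₀
  have hF₀ : F₀ = standardFundamentalMatrix a b := rfl
  simp only [hF₀, single_one_dotProduct_mulVec_single_one]
  have hrank := rank_standardFundamentalMatrix ha hb
  have he₄ := one_dotProduct_standardFundamentalMatrix_mulVec_one a b
  have hpoly := dotProduct_crossMat_mul_mulVec a b
  have h₀a := standardFundamentalMatrix_mulVec_self a b
  have h₀b := standardFundamentalMatrix_transpose_mulVec a b
  have h₀diag := standardFundamentalMatrix_apply_self a b
  refine ⟨hrank, h₀a, h₀b, h₀diag, he₄, hpoly,
    fun _ => eq_smul_standardFundamentalMatrix ha hb, ?_⟩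
  constructor
  · rintro ⟨F, hFrank, hFa, hFb, hFdiag, hFe₄⟩
    obtain ⟨c, rfl⟩ := eq_smul_standardFundamentalMatrix ha hb hFa hFb hFdiag
    have hc : c ≠ 0 := by
      rintro rfl
      simp at hFrank
    rw [smul_mulVec, dotProduct_smul, he₄, hpoly, smul_eq_mul] at hFe₄
    exact (mul_eq_zero.1 hFe₄).resolve_left hc
  · exact fun h => ⟨_, hrank, h₀a, h₀b, h₀diag, he₄.trans (hpoly.trans h)⟩
end

section
/- Let x₁,…,x₆, y₁,…,y₆ ∈ ℝ³ be nonzero vectors, and let F₁, F₂, F₃ be real 3×3 matrices that form a basis of the linear space L = {F ∈ ℝ^{3×3} : yᵢᵀ·F·xᵢ = 0 for all i = 1,…,6}. Then: (1) for every j = 1,…,6, det[F₁·xⱼ | F₂·xⱼ | F₃·xⱼ] = 0 and det[F₁ᵀ·yⱼ | F₂ᵀ·yⱼ | F₃ᵀ·yⱼ] = 0; (2) if a, b ∈ ℝ³ are nonzero and there exists a nonzero real 3×3 matrix F with yᵢᵀ·F·xᵢ = 0 for all i = 1,…,6, F·a = 0, and Fᵀ·b = 0, then det[F₁·a | F₂·a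 | F₃·a] = 0 and det[F₁ᵀ·b | F₂ᵀ·b | F₃ᵀ·b] = 0. -/
/-!
A vector `z ≠ 0` orthogonal to all three columns, or a nontrivial linear relation among them,
forces `det3` to vanish. At a data point, each `Fₖ xⱼ` is orthogonal to `yⱼ` and each `Fₖᵀ yⱼ`
to `xⱼ`. For part (2), writing `F = p F₁ + q F₂ + r F₃` with `(p, q, r) ≠ 0`, the equations
`F a = 0` and `Fᵀ b = 0` are linear relations among the columns `Fₖ a` and `Fₖᵀ b`.
-/

open Matrix

theorem det3_eq_zero_of_dotProduct_eq_zero {u v w z : Fin 3 → ℝ} (hz : z ≠ 0)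
    (hu : z ⬝ᵥ u = 0) (hv : z ⬝ᵥ v = 0) (hw : z ⬝ᵥ w = 0) : det3 u v w = 0 := by
  rw [dotProduct_comm] at hu hv hw
  rw [det3, det_transpose, ← exists_mulVec_eq_zero_iff]
  refine ⟨z, hz, ?_⟩
  ext i
  fin_cases i <;> assumption

theorem det3_eq_zero_of_linear_relation {u v w : Fin 3 → ℝ} {a b c : ℝ} (hne : ![a, b, c] ≠ 0)
    (h : a • u + b • v + c • w = 0) : det3 u v w = 0 := by
  rw [det3, ← exists_mulVec_eq_zero_iff]
  refine ⟨_, hne, ?_⟩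
  rw [mulVec_transpose]
  simpa [vecMul, dotProduct, Fin.sum_univ_three, funext_iff, mul_comm, add_assoc] using h

theorem transpose_mem_span_triple {m n R : Type*} [CommSemiring R] {F F₁ F₂ F₃ : Matrix m n R}
    (hF : F ∈ Submodule.span R {F₁, F₂, F₃}) : Fᵀ ∈ Submodule.span R {F₁ᵀ, F₂ᵀ, F₃ᵀ} := by
  obtain ⟨a, b, c, rfl⟩ := Submodule.mem_span_triple.mp hF
  exact Submodule.mem_span_triple.mpr ⟨a, b, c, by simp only [transpose_add, transpose_smul]⟩

theorem det3_mulVec_eq_zero_of_mulVec_eq_zero {F F₁ F₂ F₃ : Matrix (Fin 3) (Fin 3) ℝ}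
    (hF : F ≠ 0) (hspan : F ∈ Submodule.span ℝ {F₁, F₂, F₃}) {a : Fin 3 → ℝ}
    (ha : F *ᵥ a = 0) : det3 (F₁ *ᵥ a) (F₂ *ᵥ a) (F₃ *ᵥ a) = 0 := by
  obtain ⟨p, q, r, rfl⟩ := Submodule.mem_span_triple.mp hspan
  refine det3_eq_zero_of_linear_relation (a := p) (b := q) (c := r) ?_ ?_
  · intro hpqr
    obtain ⟨rfl, rfl, rfl⟩ : p = 0 ∧ q = 0 ∧ r = 0 :=
      ⟨congrFun hpqr 0, congrFun hpqr 1, congrFun hpqr 2⟩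
    simp at hF
  · simpa only [add_mulVec, smul_mulVec] using ha

theorem six_points_cubic_curves_general
    (x y : Fin 6 → Fin 3 → ℝ)
    (hx : ∀ i, x i ≠ 0) (hy : ∀ i, y i ≠ 0)
    (F₁ F₂ F₃ : Matrix (Fin 3) (Fin 3) ℝ)
    (hmem : ∀ i, y i ⬝ᵥ F₁.mulVec (x i) = 0 ∧ y i ⬝ᵥ F₂.mulVec (x i) = 0 ∧
      y i ⬝ᵥ F₃.mulVec (x i) = 0)
    (hspan : ∀ F : Matrix (Fin 3) (Fin 3) ℝ,
      (∀ i, y i ⬝ᵥ F.mulVec (x i) = 0) → F ∈ Submodule.span ℝ {F₁, F₂, F₃}) :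
    (∀ j, det3 (F₁.mulVec (x j)) (F₂.mulVec (x j)) (F₃.mulVec (x j)) = 0 ∧
          det3 (F₁ᵀ.mulVec (y j)) (F₂ᵀ.mulVec (y j)) (F₃ᵀ.mulVec (y j)) = 0) ∧
    (∀ a b : Fin 3 → ℝ, a ≠ 0 → b ≠ 0 →
      (∃ F : Matrix (Fin 3) (Fin 3) ℝ, F ≠ 0 ∧
        (∀ i, y i ⬝ᵥ F.mulVec (x i) = 0) ∧ F.mulVec a = 0 ∧ Fᵀ.mulVec b = 0) →
      det3 (F₁.mulVec a) (F₂.mulVec a) (F₃.mulVec a) = 0 ∧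
      det3 (F₁ᵀ.mulVec b) (F₂ᵀ.mulVec b) (F₃ᵀ.mulVec b) = 0) := by
  refine ⟨fun j => ?_, ?_⟩
  · obtain ⟨h₁, h₂, h₃⟩ := hmem j
    refine ⟨det3_eq_zero_of_dotProduct_eq_zero (hy j) h₁ h₂ h₃,
      det3_eq_zero_of_dotProduct_eq_zero (hx j) ?_ ?_ ?_⟩ <;>
      rwa [dotProduct_transpose_mulVec]
  · rintro a b - - ⟨F, hF, hFmem, hFa, hFb⟩
    have hFspan := hspan F hFmem
    exact ⟨det3_mulVec_eq_zero_of_mulVec_eq_zero hF hFspan hFa,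
      det3_mulVec_eq_zero_of_mulVec_eq_zero (transpose_eq_zero.not.mpr hF)
        (transpose_mem_span_triple hFspan) hFb⟩

/-- Concrete form of Theorem 27 (n = 6): the possible camera centers `a`, `b`
for six labeled point pairs lie on the cubic curves
`det[F₁a | F₂a | F₃a] = 0` and `det[F₁ᵀb | F₂ᵀb | F₃ᵀb] = 0`, where
`F₁, F₂, F₃` is a basis of the space of matrices satisfying the six incidence
constraints; moreover these cubics pass through the six data points. -/
theorem six_points_cubic_curves
    (x y : Fin 6 → Fin 3 → ℝ)
    (hx : ∀ i, x i ≠ 0) (hy : ∀ i, y i ≠ 0)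
    (F₁ F₂ F₃ : Matrix (Fin 3) (Fin 3) ℝ)
    (hmem : ∀ i, y i ⬝ᵥ F₁.mulVec (x i) = 0 ∧ y i ⬝ᵥ F₂.mulVec (x i) = 0 ∧
      y i ⬝ᵥ F₃.mulVec (x i) = 0)
    (hind : LinearIndependent ℝ ![F₁, F₂, F₃])
    (hspan : ∀ F : Matrix (Fin 3) (Fin 3) ℝ,
      (∀ i, y i ⬝ᵥ F.mulVec (x i) = 0) → F ∈ Submodule.span ℝ {F₁, F₂, F₃}) :
    (∀ j, det3 (F₁.mulVec (x j)) (F₂.mulVec (x j)) (F₃.mulVec (x j)) = 0 ∧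
          det3 (F₁ᵀ.mulVec (y j)) (F₂ᵀ.mulVec (y j)) (F₃ᵀ.mulVec (y j)) = 0) ∧
    (∀ a b : Fin 3 → ℝ, a ≠ 0 → b ≠ 0 →
      (∃ F : Matrix (Fin 3) (Fin 3) ℝ, F ≠ 0 ∧
        (∀ i, y i ⬝ᵥ F.mulVec (x i) = 0) ∧ F.mulVec a = 0 ∧ Fᵀ.mulVec b = 0) →
      det3 (F₁.mulVec a) (F₂.mulVec a) (F₃.mulVec a) = 0 ∧
      det3 (F₁ᵀ.mulVec b) (F₂ᵀ.mulVec b) (F₃ᵀ.mulVec b) = 0) :=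
  six_points_cubic_curves_general x y hx hy F₁ F₂ F₃ hmem hspan
end
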